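/- arXiv:2507.20037 — 7 statements merged into one kernel-verified Lean document; each statement's English description precedes it below -/
import Mathlib

section
/- Let d ≥ 2. In the ring of symmetric functions over ℤ (in countably many variables x_0, x_1, x_2, …), the coefficient of the monomial x_0 x_1 x_2 · ∏_{i=2}^{d-1}(x_0 ⋯ x_i) in the product e_1 e_2 ⋯ e_d of the first d elementary symmetric functions equals 3. (For d = 2 the monomial is x_0 x_1 x_2 and the product is e_1 e_2.) -/
open Finset

/-- Indicator finsupp of a finset. -/
noncomputable def ind (s : Finset ℕ) : ℕ →₀ ℕ := ∑ j ∈ s, Finsupp.single j 1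

lemma ind_apply (s : Finset ℕ) (j : ℕ) : ind s j = if j ∈ s then 1 else 0 := by
  simp [ind, Finsupp.finset_sum_apply, Finsupp.single_apply]

lemma ind_support (s : Finset ℕ) : (ind s).support = s := by
  ext j; simp [Finsupp.mem_support_iff, ind_apply]

lemma ind_le_iff (s : Finset ℕ) (μ : ℕ →₀ ℕ) :
    ind s ≤ μ ↔ ∀ j ∈ s, 1 ≤ μ j := by
  constructor
  · intro h j hj
    have := h j
    rwa [ind_apply, if_pos hj] at this
  · intro h j
    rw [ind_apply]
    split_ifs with hj
    · exact h j hj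
    · exact Nat.zero_le _

lemma ind_sum (s : Finset ℕ) : (ind s).sum (fun _ m => m) = s.card := by
  rw [Finsupp.sum, ind_support]
  rw [Finset.sum_congr rfl (fun j hj => by rw [ind_apply, if_pos hj])]
  simp

/-- A finsupp with squarefree values whose degree is the support-cardinality
of a majorizing `μ` must be the indicator of `μ.support`. -/
lemma sqf_eq (g μ : ℕ →₀ ℕ) (hle : g ≤ μ)
    (hsq : ∀ i ∈ g.support, g i ≤ 1)
    (hsum : g.sum (fun _ m => m) = μ.support.card) : g = ind μ.support := by
  have hsub : g.support ⊆ μ.support := by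
    intro j hj
    rw [Finsupp.mem_support_iff] at hj ⊢
    have := hle j
    omega
  have hone : ∀ j ∈ g.support, g j = 1 := by
    intro j hj
    have h1 := hsq j hj
    rw [Finsupp.mem_support_iff] at hj
    omega
  have hcard : g.support.card = μ.support.card := by
    rw [← hsum, Finsupp.sum, Finset.sum_congr rfl hone]
    simp
  have hs : g.support = μ.support :=
    Finset.eq_of_subset_of_card_le hsub (le_of_eq hcard.symm)
  ext j
  rw [ind_apply]
  by_cases hj : j ∈ μ.support
  · rw [if_pos hj, hone j (hs ▸ hj)]
  · rw [if_neg hj]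
    rw [← hs, Finsupp.notMem_support_iff] at hj
    exact hj

/-- Degree-one squarefree finsupps are singles. -/
lemma sum_eq_one (f : ℕ →₀ ℕ) (h : f.sum (fun _ m => m) = 1) :
    ∃ j, f = Finsupp.single j 1 := by
  have hne : f ≠ 0 := by rintro rfl; simp at h
  obtain ⟨j, hj⟩ := Finsupp.support_nonempty_iff.mpr hne
  have hsum : ∑ i ∈ f.support, f i = 1 := h
  have hfj : f j ≤ 1 := hsum ▸ Finset.single_le_sum (fun i _ => Nat.zero_le _) hj
  have hj0 : f j ≠ 0 := Finsupp.mem_support_iff.mp hj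
  refine ⟨j, ?_⟩
  ext i
  rw [Finsupp.single_apply]
  by_cases hij : j = i
  · subst hij; rw [if_pos rfl]; omega
  · rw [if_neg hij]
    by_contra hfi
    have hi : i ∈ f.support := Finsupp.mem_support_iff.mpr hfi
    have hsub : ({i, j} : Finset ℕ) ⊆ f.support := by
      intro x hx
      simp only [Finset.mem_insert, Finset.mem_singleton] at hx
      rcases hx with rfl | rfl <;> assumption
    have := Finset.sum_le_sum_of_subset hsub (f := fun i => f i)
    rw [Finset.sum_pair (fun h => hij h.symm), hsum] at this
    omega
open Finset

/-- Extracting the top elementary symmetric factor: if `μ` has support of size `n`,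
the only squarefree degree-`n` monomial below `μ` is the indicator of its support. -/
lemma key (e : ℕ → MvPowerSeries ℕ ℤ)
    (he : ∀ (k : ℕ) (f : ℕ →₀ ℕ),
      MvPowerSeries.coeff f (e k) =
        if (∀ i ∈ f.support, f i ≤ 1) ∧ (f.sum fun _ m => m) = k then 1 else 0)
    (P : MvPowerSeries ℕ ℤ) (n : ℕ) (μ : ℕ →₀ ℕ) (h : μ.support.card = n) :
    MvPowerSeries.coeff μ (P * e n) =
      MvPowerSeries.coeff (μ - ind μ.support) P := by
  have hle : ind μ.support ≤ μ := by
    rw [ind_le_iff]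
    intro j hj
    rw [Finsupp.mem_support_iff] at hj
    omega
  have hadd : (μ - ind μ.support) + ind μ.support = μ := tsub_add_cancel_of_le hle
  rw [MvPowerSeries.coeff_mul]
  rw [Finset.sum_eq_single (μ - ind μ.support, ind μ.support)]
  · rw [he]
    rw [if_pos ⟨fun i _ => by rw [ind_apply]; split_ifs <;> omega,
      by rw [ind_sum, h]⟩, mul_one]
  · rintro ⟨f, g⟩ hp hne
    rw [Finset.HasAntidiagonal.mem_antidiagonal] at hp
    rw [he]
    split_ifs with hc
    · exfalso
      apply hne
      have hgle : g ≤ μ := by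
        intro j
        have : f j + g j = μ j := by rw [← hp]; rfl
        omega
      have hg : g = ind μ.support := sqf_eq g μ hgle hc.1 (by rw [hc.2, h])
      subst hg
      have : f = μ - ind μ.support := by
        have := hadd
        exact add_right_cancel (hp.trans this.symm)
      rw [this]
    · exact mul_zero _
  · intro hmem
    exact absurd (Finset.HasAntidiagonal.mem_antidiagonal.mpr hadd) hmem
lemma ind_range_three :
    ind (range 3) = Finsupp.single 0 1 + Finsupp.single 1 1 + Finsupp.single 2 1 := by
  rw [ind]
  rw [Finset.sum_range_succ, Finset.sum_range_succ, Finset.sum_range_one]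

lemma base (e : ℕ → MvPowerSeries ℕ ℤ)
    (he : ∀ (k : ℕ) (f : ℕ →₀ ℕ),
      MvPowerSeries.coeff f (e k) =
        if (∀ i ∈ f.support, f i ≤ 1) ∧ (f.sum fun _ m => m) = k then 1 else 0) :
    MvPowerSeries.coeff (ind (range 3)) (e 1 * e 2) = 3 := by
  classical
  set s0 : ℕ →₀ ℕ := Finsupp.single 0 1 with hs0
  set s1 : ℕ →₀ ℕ := Finsupp.single 1 1 with hs1
  set s2 : ℕ →₀ ℕ := Finsupp.single 2 1 with hs2
  set S : Finset ((ℕ →₀ ℕ) × (ℕ →₀ ℕ)) :=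
    {(s0, s1 + s2), (s1, s0 + s2), (s2, s0 + s1)} with hS
  have hμ0 : ind (range 3) = s0 + (s1 + s2) := by
    rw [ind_range_three]; abel
  have hμ1 : ind (range 3) = s1 + (s0 + s2) := by
    rw [ind_range_three]; abel
  have hμ2 : ind (range 3) = s2 + (s0 + s1) := by
    rw [ind_range_three]; abel
  -- squarefree & degree facts for the pieces
  have hsq_single : ∀ j : ℕ, ∀ i ∈ (Finsupp.single j 1).support, (Finsupp.single j 1) i ≤ 1 := by
    intro j i _
    rw [Finsupp.single_apply]
    split_ifs <;> omega
  have hsum_single : ∀ j : ℕ, (Finsupp.single j 1).sum (fun _ m => m) = 1 := by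
    intro j; rw [Finsupp.sum_single_index]; rfl
  have hsq_pair : ∀ a b : ℕ, a ≠ b →
      ∀ i ∈ (Finsupp.single a 1 + Finsupp.single b 1 : ℕ →₀ ℕ).support,
      (Finsupp.single a 1 + Finsupp.single b 1 : ℕ →₀ ℕ) i ≤ 1 := by
    intro a b hab i _
    rw [Finsupp.add_apply, Finsupp.single_apply, Finsupp.single_apply]
    split_ifs <;> omega
  have hsum_pair : ∀ a b : ℕ, (Finsupp.single a 1 + Finsupp.single b 1).sum (fun _ m => m) = 2 := by
    intro a b
    rw [Finsupp.sum_add_index' (fun _ => rfl) (fun _ _ _ => rfl), hsum_single, hsum_single]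
  have hterm : ∀ p ∈ Finset.HasAntidiagonal.antidiagonal (ind (range 3)),
      MvPowerSeries.coeff p.1 (e 1) * MvPowerSeries.coeff p.2 (e 2) =
        if p ∈ S then 1 else 0 := by
    rintro ⟨f, g⟩ hp
    rw [Finset.HasAntidiagonal.mem_antidiagonal] at hp
    rw [he, he, ite_zero_mul_ite_zero, one_mul]
    congr 1
    apply propext
    constructor
    · rintro ⟨⟨-, hf1⟩, hg⟩
      obtain ⟨j, rfl⟩ := sum_eq_one f hf1
      have hjle : (Finsupp.single j 1) j ≤ ind (range 3) j := by
        have : (Finsupp.single j 1) j + g j = ind (range 3) j := by rw [← hp]; rfl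
        omega
      rw [Finsupp.single_apply, if_pos rfl, ind_apply] at hjle
      have hj3 : j ∈ range 3 := by by_contra hj; rw [if_neg hj] at hjle; omega
      rw [Finset.mem_range] at hj3
      interval_cases j
      · have : g = s1 + s2 := by
          apply add_left_cancel (a := s0)
          exact hp.trans hμ0
        rw [this]
        simp [hS, hs0, hs1, hs2]
      · have : g = s0 + s2 := by
          apply add_left_cancel (a := s1)
          exact hp.trans hμ1
        rw [this]
        simp [hS, hs0, hs1, hs2]
      · have : g = s0 + s1 := by
          apply add_left_cancel (a := s2)
          exact hp.trans hμ2
        rw [this]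
        simp [hS, hs0, hs1, hs2]
    · intro hmem
      rw [hS] at hmem
      simp only [Finset.mem_insert, Finset.mem_singleton, Prod.mk.injEq] at hmem
      rcases hmem with ⟨rfl, rfl⟩ | ⟨rfl, rfl⟩ | ⟨rfl, rfl⟩
      · exact ⟨⟨hsq_single 0, hsum_single 0⟩,
          fun i hi => hsq_pair 1 2 (by omega) i hi, hsum_pair 1 2⟩
      · exact ⟨⟨hsq_single 1, hsum_single 1⟩,
          fun i hi => hsq_pair 0 2 (by omega) i hi, hsum_pair 0 2⟩
      · exact ⟨⟨hsq_single 2, hsum_single 2⟩,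
          fun i hi => hsq_pair 0 1 (by omega) i hi, hsum_pair 0 1⟩
  rw [MvPowerSeries.coeff_mul, Finset.sum_congr rfl hterm, Finset.sum_ite_mem]
  have hSsub : S ⊆ Finset.HasAntidiagonal.antidiagonal (ind (range 3)) := by
    intro p hp
    rw [hS] at hp
    simp only [Finset.mem_insert, Finset.mem_singleton] at hp
    rw [Finset.HasAntidiagonal.mem_antidiagonal]
    rcases hp with rfl | rfl | rfl
    · exact hμ0.symm
    · exact hμ1.symm
    · exact hμ2.symm
  rw [Finset.inter_eq_right.mpr hSsub, Finset.sum_const]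
  have h01 : s0 ≠ s1 := by
    intro h
    have := DFunLike.congr_fun h 0
    simp [hs0, hs1, Finsupp.single_apply] at this
  have h02 : s0 ≠ s2 := by
    intro h
    have := DFunLike.congr_fun h 0
    simp [hs0, hs2, Finsupp.single_apply] at this
  have h12 : s1 ≠ s2 := by
    intro h
    have := DFunLike.congr_fun h 1
    simp [hs1, hs2, Finsupp.single_apply] at this
  have hcard : S.card = 3 := by
    rw [hS]
    rw [Finset.card_insert_of_notMem, Finset.card_insert_of_notMem, Finset.card_singleton]
    · simp only [Finset.mem_singleton, Prod.mk.injEq, not_and]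
      intro h; exact absurd h h12
    · simp only [Finset.mem_insert, Finset.mem_singleton, Prod.mk.injEq, not_or, not_and]
      exact ⟨fun h => absurd h h01, fun h => absurd h h02⟩
  rw [hcard]
  norm_num
/-- The target exponent vector. -/
noncomputable def T (d : ℕ) : ℕ →₀ ℕ :=
  ind (range 3) + ∑ i ∈ Finset.Icc 2 (d - 1), ind (range (i + 1))

lemma T_apply_zero (d j : ℕ) (h3 : 3 ≤ j) (hd : d ≤ j) : T d j = 0 := by
  rw [T, Finsupp.add_apply, Finsupp.finset_sum_apply]
  rw [ind_apply, if_neg (by simp; omega)]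
  rw [Finset.sum_eq_zero, add_zero]
  intro i hi
  rw [Finset.mem_Icc] at hi
  rw [ind_apply, if_neg (by simp; omega)]

lemma T_succ (d : ℕ) (hd : 2 ≤ d) :
    T (d + 1) = T d + ind (range (d + 1)) := by
  rw [T, T]
  have h1 : d + 1 - 1 = (d - 1) + 1 := by omega
  rw [h1, Finset.sum_Icc_succ_top (by omega)]
  have h2 : d - 1 + 1 = d := by omega
  rw [h2, add_assoc]

lemma T_succ_support (d : ℕ) (hd : 2 ≤ d) :
    (T (d + 1)).support = range (d + 1) := by
  ext j
  rw [Finsupp.mem_support_iff, Finset.mem_range]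
  rw [T_succ d hd, Finsupp.add_apply]
  constructor
  · intro h
    by_contra hj
    push_neg at hj
    rw [T_apply_zero d j (by omega) (by omega), ind_apply,
      if_neg (by rw [Finset.mem_range]; omega)] at h
    exact h rfl
  · intro h
    rw [ind_apply, if_pos (Finset.mem_range.mpr h)]
    omega

lemma main_claim (e : ℕ → MvPowerSeries ℕ ℤ)
    (he : ∀ (k : ℕ) (f : ℕ →₀ ℕ),
      MvPowerSeries.coeff f (e k) =
        if (∀ i ∈ f.support, f i ≤ 1) ∧ (f.sum fun _ m => m) = k then 1 else 0) :
    ∀ d, 2 ≤ d → MvPowerSeries.coeff (T d) (∏ k ∈ Finset.Icc 1 d, e k) = 3 := by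
  intro d hd
  induction d, hd using Nat.le_induction with
  | base =>
    have h1 : T 2 = ind (range 3) := by
      rw [T]
      norm_num
    have h2 : (Finset.Icc 1 2) = {1, 2} := rfl
    rw [h1, h2, Finset.prod_insert (by decide), Finset.prod_singleton]
    exact base e he
  | succ d hd ih =>
    rw [Finset.prod_Icc_succ_top (by omega)]
    rw [key e he _ (d + 1) (T (d + 1))
      (by rw [T_succ_support d hd, Finset.card_range])]
    rw [T_succ_support d hd]
    have : T (d + 1) - ind (range (d + 1)) = T d := by
      rw [T_succ d hd, add_tsub_cancel_right]
    rw [this]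
    exact ih


/-- In the ring of symmetric functions in countably many variables
`x_0, x_1, x_2, …` over `ℤ` (modeled inside multivariate power series, where
`e k` is the `k`-th elementary symmetric function, i.e. the sum of all
squarefree monomials of degree `k`), the coefficient of the monomial
`x_0 x_1 x_2 ∏_{i=2}^{d-1} (x_0 ⋯ x_i)` in the product `e_1 e_2 ⋯ e_d`
equals `3`, for any `d ≥ 2`. -/
theorem stmt_3 (d : ℕ) (hd : 2 ≤ d) (e : ℕ → MvPowerSeries ℕ ℤ)
    (he : ∀ (k : ℕ) (f : ℕ →₀ ℕ),
      MvPowerSeries.coeff f (e k) =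
        if (∀ i ∈ f.support, f i ≤ 1) ∧ (f.sum fun _ m => m) = k then 1 else 0) :
    MvPowerSeries.coeff (R := ℤ)
      (Finsupp.single 0 1 + Finsupp.single 1 1 + Finsupp.single 2 1 +
        ∑ i ∈ Finset.Icc 2 (d - 1), ∑ j ∈ Finset.range (i + 1), Finsupp.single j 1)
      (∏ k ∈ Finset.Icc 1 d, e k) = 3 := by
  have h : Finsupp.single 0 1 + Finsupp.single 1 1 + Finsupp.single 2 1 +
      ∑ i ∈ Finset.Icc 2 (d - 1), ∑ j ∈ Finset.range (i + 1), Finsupp.single j 1 = T d := by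
    rw [T, ind_range_three]
    rfl
  rw [h]
  exact main_claim e he d hd
end

section
/- Let G be a finite group acting by graded algebra automorphisms on an ℕ-graded connected finitely generated k-algebra R, where char k does not divide |G|, and let ϑ_1,…,ϑ_n be a G-invariant homogeneous system of parameters. Then there exists a G-equivariant surjection of ℕ-graded k[ϑ_1,…,ϑ_n]-modules from (R/(ϑ_1,…,ϑ_n)R) ⊗_k k[ϑ_1,…,ϑ_n] onto R, where G acts on the tensor product via the first factor and k[ϑ_1,…,ϑ_n] acts via the second factor. -/
open TensorProduct

set_option synthInstance.maxHeartbeats 1000000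
set_option maxHeartbeats 1000000

/-- Averaged graded section: given a `G`-stable subspace `V` of `R` and a `G`-stable
ideal `I`, there is a `k`-linear map `f : V →ₗ[k] R` landing in `V`, killing `V ∩ I`,
which is a section of the projection mod `I`, and is `G`-equivariant. -/
theorem aux_section {k R G : Type} [Field k] [CommRing R] [Algebra k R]
    [Group G] [Fintype G] [MulSemiringAction G R] [SMulCommClass G k R]
    (V : Submodule k R) (I : Ideal R)
    (hchar : (Nat.card G : k) ≠ 0)
    (hGV : ∀ (g : G), ∀ x ∈ V, g • x ∈ V)
    (hGI : ∀ (g : G), ∀ x ∈ I, g • x ∈ I) :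
    ∃ f : V →ₗ[k] R, (∀ x : V, f x ∈ V) ∧ (∀ x : V, (x : R) ∈ I → f x = 0) ∧
      (∀ x : V, (x : R) - f x ∈ I) ∧
      (∀ (g : G) (x y : V), (y : R) = g • (x : R) → f y = g • f x) := by
  classical
  set U : Submodule k V := (I.restrictScalars k).comap V.subtype with hU
  obtain ⟨C, hC⟩ := U.exists_isCompl
  set π0 : V →ₗ[k] R := V.subtype ∘ₗ C.subtype ∘ₗ Submodule.linearProjOfIsCompl C U hC.symm
    with hπ0
  have hπ0V : ∀ x : V, π0 x ∈ V := fun x => SetLike.coe_mem _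
  have hπ0I : ∀ x : V, (x : R) ∈ I → π0 x = 0 := by
    intro x hx
    have hxU : x ∈ U := hx
    simp [hπ0, show C.linearProjOfIsCompl U hC.symm x = 0 from
      Submodule.projectionOnto_apply_of_mem_right hC.symm hxU]
  have hπ0sub : ∀ x : V, (x : R) - π0 x ∈ I := by
    intro x
    have hsum : ((C.linearProjOfIsCompl U hC.symm x : V) : V) + (U.linearProjOfIsCompl C hC.symm.symm x : V) = x :=
      Submodule.projection_add_projection_eq_self hC.symm x
    have h2 : (x : R) - π0 x = ((U.linearProjOfIsCompl C hC.symm.symm x : V) : R) := by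
      have h := congrArg (fun v : V => (v : R)) hsum
      push_cast at h
      simp only [hπ0, LinearMap.coe_comp, Function.comp_apply, Submodule.coe_subtype]
      rw [← h]
      push_cast
      ring
    rw [h2]
    exact (U.linearProjOfIsCompl C hC.symm.symm x).2
  have hGmem : ∀ (g : G) (x : V), g • (x : R) ∈ V := fun g x => hGV g x x.2
  set gm : G → (V →ₗ[k] V) := fun g =>
    { toFun := fun x => ⟨g • (x : R), hGmem g x⟩
      map_add' := fun x y => by ext; simp [smul_add]
      map_smul' := fun c x => by ext; simp [smul_comm g c] } with hgm
  have hgmcoe : ∀ (g : G) (x : V), ((gm g x : V) : R) = g • (x : R) := fun g x => rfl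
  set N : k := (Nat.card G : k)⁻¹ with hN
  set f : V →ₗ[k] R :=
    N • ∑ g : G, (DistribMulAction.toLinearMap k R (g⁻¹ : G)) ∘ₗ π0 ∘ₗ gm g with hfdef
  have hfapp : ∀ x : V, f x = N • ∑ g : G, g⁻¹ • π0 (gm g x) := by
    intro x
    simp [hfdef, LinearMap.sum_apply, DistribMulAction.toLinearMap, DistribSMul.toLinearMap_apply]
  refine ⟨f, ?_, ?_, ?_, ?_⟩
  · intro x
    rw [hfapp]
    refine Submodule.smul_mem _ _ (Submodule.sum_mem _ fun g _ => ?_)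
    exact hGV g⁻¹ _ (hπ0V _)
  · intro x hx
    rw [hfapp]
    have : ∀ g : G, π0 (gm g x) = 0 := fun g => hπ0I _ (hGI g _ hx)
    simp [this]
  · intro x
    have key : (x : R) - f x = N • ∑ g : G, g⁻¹ • ((g • (x : R)) - π0 (gm g x)) := by
      rw [hfapp]
      have h1 : ∀ g : G, g⁻¹ • ((g • (x : R)) - π0 (gm g x))
          = (x : R) - g⁻¹ • π0 (gm g x) := by
        intro g
        rw [smul_sub, inv_smul_smul]
      simp only [h1]
      rw [Finset.sum_sub_distrib, smul_sub]
      congr 1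
      rw [Finset.sum_const, Finset.card_univ, ← Nat.card_eq_fintype_card,
        ← Nat.cast_smul_eq_nsmul k, hN, smul_smul, inv_mul_cancel₀ hchar, one_smul]
    rw [key]
    have : ∀ g : G, g⁻¹ • ((g • (x : R)) - π0 (gm g x)) ∈ I := by
      intro g
      exact hGI g⁻¹ _ (hπ0sub (gm g x))
    exact Submodule.smul_mem (I.restrictScalars k) N
      (Submodule.sum_mem (I.restrictScalars k) fun g _ => this g)
  · intro g x y hy
    rw [hfapp, hfapp]
    have h1 : ∀ h : G, gm h y = gm (h * g) x := by
      intro h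
      apply Subtype.ext
      rw [hgmcoe, hgmcoe, hy, mul_smul]
    have h2 : (∑ h : G, h⁻¹ • π0 (gm h y))
        = ∑ h : G, (h * g⁻¹)⁻¹ • π0 (gm h x) := by
      refine Fintype.sum_equiv (Equiv.mulRight g) _ _ fun h => ?_
      rw [h1 h]
      simp [mul_assoc]
    rw [h2]
    have h3 : ∀ h : G, (h * g⁻¹)⁻¹ • π0 (gm h x) = g • h⁻¹ • π0 (gm h x) := by
      intro h
      rw [mul_inv_rev, inv_inv, mul_smul]
    simp only [h3]
    rw [← Finset.smul_sum, smul_comm g N]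

/-- Let `G` be a finite group acting by graded `k`-algebra automorphisms on an
ℕ-graded connected finitely generated `k`-algebra `R`, with `char k` coprime
to `|G|`, and let `ϑ₁,…,ϑₙ` be a `G`-invariant homogeneous system of
parameters.  Then there is a `G`-equivariant surjection of ℕ-graded
`k[ϑ]`-modules `k[ϑ] ⊗_k (R/(ϑ)R) → R`, where `G` acts via the quotient
factor and `k[ϑ]` acts via the other factor. -/
theorem stmt_9 (k R G : Type) [Field k] [CommRing R] [Algebra k R]
    [Group G] [Finite G]
    [MulSemiringAction G R] [SMulCommClass G k R]
    (𝒜 : ℕ → Submodule k R) [GradedAlgebra 𝒜]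
    (hconn : ∀ x ∈ 𝒜 0, ∃ c : k, x = algebraMap k R c)
    (hfg : Algebra.FiniteType k R)
    (hchar : (Nat.card G : k) ≠ 0)
    (hGgraded : ∀ (g : G) (d : ℕ), ∀ x ∈ 𝒜 d, g • x ∈ 𝒜 d)
    (n : ℕ) (ϑ : Fin n → R)
    (hhom : ∀ i, ∃ d, 0 < d ∧ ϑ i ∈ 𝒜 d)
    (hind : AlgebraicIndependent k ϑ)
    (hfin : Module.Finite (↥(Algebra.adjoin k (Set.range ϑ))) R)
    (hinv : ∀ (g : G) (i : Fin n), g • ϑ i = ϑ i) :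
    ∃ Φ : (↥(Algebra.adjoin k (Set.range ϑ)) ⊗[k] (R ⧸ Ideal.span (Set.range ϑ)))
        →ₗ[↥(Algebra.adjoin k (Set.range ϑ))] R,
      Function.Surjective Φ ∧
      (∀ (g : G) (a : ↥(Algebra.adjoin k (Set.range ϑ))) (r : R),
        Φ (a ⊗ₜ[k] Ideal.Quotient.mk (Ideal.span (Set.range ϑ)) (g • r)) =
          g • Φ (a ⊗ₜ[k] Ideal.Quotient.mk (Ideal.span (Set.range ϑ)) r)) ∧
      (∀ (i j : ℕ) (a : ↥(Algebra.adjoin k (Set.range ϑ))) (r : R),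
        (a : R) ∈ 𝒜 i → r ∈ 𝒜 j →
          Φ (a ⊗ₜ[k] Ideal.Quotient.mk (Ideal.span (Set.range ϑ)) r) ∈ 𝒜 (i + j)) := by
  classical
  cases nonempty_fintype G
  set A := Algebra.adjoin k (Set.range ϑ) with hA
  set I := Ideal.span (Set.range ϑ) with hIdef
  choose d hd1 hd2 using hhom
  -- I is a homogeneous ideal
  have hIhom : I.IsHomogeneous 𝒜 := by
    apply Ideal.homogeneous_span
    rintro x ⟨i, rfl⟩
    exact ⟨d i, hd2 i⟩
  -- G fixes A pointwise
  have hGfix : ∀ (g : G) (a : R), a ∈ A → g • a = a := by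
    intro g a ha
    induction ha using Algebra.adjoin_induction with
    | mem x hx => obtain ⟨i, rfl⟩ := hx; exact hinv g i
    | algebraMap c =>
        rw [Algebra.algebraMap_eq_smul_one, smul_comm g c, smul_one]
    | add x y _ _ hx hy => rw [smul_add, hx, hy]
    | mul x y _ _ hx hy => rw [smul_mul', hx, hy]
  -- I is G-stable
  have hGI : ∀ (g : G), ∀ x ∈ I, g • x ∈ I := by
    intro g x hx
    refine Submodule.span_induction ?_ ?_ ?_ ?_ hx
    · rintro y ⟨i, rfl⟩
      rw [hinv g i]
      exact Ideal.subset_span ⟨i, rfl⟩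
    · rw [smul_zero]; exact I.zero_mem
    · intro a b _ _ ha hb; rw [smul_add]; exact I.add_mem ha hb
    · intro r a _ h
      rw [smul_eq_mul, smul_mul']
      exact I.mul_mem_left _ h
  -- choose the equivariant graded sections degree by degree
  have hfex : ∀ j : ℕ, ∃ f : 𝒜 j →ₗ[k] R, (∀ x : 𝒜 j, f x ∈ 𝒜 j) ∧
      (∀ x : 𝒜 j, (x : R) ∈ I → f x = 0) ∧
      (∀ x : 𝒜 j, (x : R) - f x ∈ I) ∧
      (∀ (g : G) (x y : 𝒜 j), (y : R) = g • (x : R) → f y = g • f x) :=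
    fun j => aux_section (𝒜 j) I hchar (fun g x hx => hGgraded g j x hx) hGI
  choose f hf1 hf2 hf3 hf4 using hfex
  -- assemble into a single projection p : R →ₗ[k] R
  set p : R →ₗ[k] R :=
    (DirectSum.toModule k ℕ R f) ∘ₗ (DirectSum.decomposeLinearEquiv 𝒜).toLinearMap with hpdef
  have hp_hom : ∀ (j : ℕ) (r : R) (hr : r ∈ 𝒜 j), p r = f j ⟨r, hr⟩ := by
    intro j r hr
    have hdec : DirectSum.decompose 𝒜 r = DirectSum.of (fun i => ↥(𝒜 i)) j ⟨r, hr⟩ :=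
      DirectSum.decompose_of_mem 𝒜 hr
    simp [hpdef, DirectSum.decomposeLinearEquiv_apply, hdec, ← DirectSum.lof_eq_of k, DirectSum.toModule_lof]
  have hsum_decomp : ∀ r : R,
      r = ∑ j ∈ DFinsupp.support (DirectSum.decompose 𝒜 r),
        ((DirectSum.decompose 𝒜 r j : 𝒜 j) : R) :=
    fun r => (DirectSum.sum_support_decompose 𝒜 r).symm
  have hpmem : ∀ (j : ℕ) (r : R), r ∈ 𝒜 j → p r ∈ 𝒜 j := by
    intro j r hr
    rw [hp_hom j r hr]
    exact hf1 j _
  have hpI : ∀ x ∈ I, p x = 0 := by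
    intro x hx
    conv_lhs => rw [hsum_decomp x]
    rw [map_sum]
    refine Finset.sum_eq_zero fun j _ => ?_
    rw [hp_hom j _ (SetLike.coe_mem _)]
    exact hf2 j _ (hIhom j hx)
  have hpsub : ∀ r : R, r - p r ∈ I := by
    intro r
    have hkey : r - p r = ∑ j ∈ DFinsupp.support (DirectSum.decompose 𝒜 r),
        (((DirectSum.decompose 𝒜 r j : 𝒜 j) : R)
          - p ((DirectSum.decompose 𝒜 r j : 𝒜 j) : R)) := by
      rw [Finset.sum_sub_distrib, ← map_sum, ← hsum_decomp]
    rw [hkey]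
    refine Submodule.sum_mem _ fun j _ => ?_
    rw [hp_hom j _ (SetLike.coe_mem _)]
    exact hf3 j _
  have hpG : ∀ (g : G) (r : R), p (g • r) = g • p r := by
    intro g r
    conv_lhs => rw [hsum_decomp r, Finset.smul_sum]
    rw [map_sum]
    conv_rhs => rw [hsum_decomp r, map_sum, Finset.smul_sum]
    refine Finset.sum_congr rfl fun j _ => ?_
    have hgc : g • ((DirectSum.decompose 𝒜 r j : 𝒜 j) : R) ∈ 𝒜 j :=
      hGgraded g j _ (SetLike.coe_mem _)
    rw [hp_hom j _ hgc, hp_hom j _ (SetLike.coe_mem _)]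
    exact hf4 j g _ _ rfl
  -- the induced section s : R/I →ₗ[k] R
  have hker : I.restrictScalars k ≤ LinearMap.ker p := fun x hx => hpI x hx
  set s : (R ⧸ I) →ₗ[k] R :=
    (Submodule.liftQ (I.restrictScalars k) p hker) ∘ₗ
      (Submodule.Quotient.restrictScalarsEquiv k I).symm.toLinearMap with hsdef
  have hs : ∀ r : R, s (Ideal.Quotient.mk I r) = p r := by
    intro r
    have h0 : Ideal.Quotient.mk I r = Submodule.Quotient.mk r := rfl
    rw [hsdef]
    simp only [LinearMap.coe_comp, Function.comp_apply, LinearEquiv.coe_coe, h0,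
      Submodule.Quotient.restrictScalarsEquiv_symm_mk, Submodule.liftQ_apply]
  -- the map Φ
  set Φ : (↥A ⊗[k] (R ⧸ I)) →ₗ[↥A] R := LinearMap.liftBaseChange ↥A s with hΦdef
  have hΦ : ∀ (a : ↥A) (q : R ⧸ I), Φ (a ⊗ₜ[k] q) = a • s q := fun a q => rfl
  have hsmul : ∀ (a : ↥A) (z : R), a • z = (a : R) * z := fun a z => rfl
  refine ⟨Φ, ?_, ?_, ?_⟩
  · -- surjectivity
    have hϑA : ∀ i, ϑ i ∈ A := fun i => Algebra.subset_adjoin ⟨i, rfl⟩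
    have hmemM : ∀ r : R, p r ∈ LinearMap.range Φ := by
      intro r
      exact ⟨(1 : ↥A) ⊗ₜ[k] Ideal.Quotient.mk I r, by rw [hΦ, hs, one_smul]⟩
    have hstep : ∀ j : ℕ, ∀ r ∈ 𝒜 j, r ∈ LinearMap.range Φ := by
      intro j
      induction j using Nat.strong_induction_on with
      | _ j IH =>
      intro r hr
      have h1 : r - p r ∈ I := hpsub r
      have h2 : r - p r ∈ 𝒜 j := sub_mem hr (hpmem j r hr)
      obtain ⟨c, hc⟩ := Ideal.mem_span_range_iff_exists_fun.mp h1
      have hkey : r - p r = ∑ i : Fin n, (DirectSum.decompose 𝒜 (c i * ϑ i) j : R) := by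
        conv_lhs => rw [← DirectSum.decompose_of_mem_same 𝒜 h2, ← hc]
        rw [DirectSum.decompose_sum, DFinsupp.finset_sum_apply,
          AddSubmonoidClass.coe_finset_sum]
      have hsubrange : r - p r ∈ LinearMap.range Φ := by
        rw [hkey]
        refine Submodule.sum_mem _ fun i _ => ?_
        by_cases hij : d i ≤ j
        · rw [DirectSum.coe_decompose_mul_of_right_mem_of_le 𝒜 (hd2 i) hij]
          have hz : (DirectSum.decompose 𝒜 (c i) (j - d i) : R) ∈ LinearMap.range Φ := by
            refine IH _ ?_ _ (SetLike.coe_mem _)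
            exact Nat.sub_lt (lt_of_lt_of_le (hd1 i) hij) (hd1 i)
          rw [mul_comm, ← hsmul ⟨ϑ i, hϑA i⟩]
          exact Submodule.smul_mem _ _ hz
        · rw [DirectSum.coe_decompose_mul_of_right_mem_of_not_le 𝒜 (hd2 i) hij]
          exact zero_mem _
      have := Submodule.add_mem _ hsubrange (hmemM r)
      simpa using this
    intro r
    obtain ⟨t, ht⟩ : r ∈ LinearMap.range Φ := by
      rw [hsum_decomp r]
      exact Submodule.sum_mem _ fun j _ => hstep j _ (SetLike.coe_mem _)
    exact ⟨t, ht⟩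
  · -- G-equivariance
    intro g a r
    rw [hΦ, hΦ, hs, hs, hpG g r, hsmul, hsmul, smul_mul', hGfix g (a : R) a.2]
  · -- grading
    intro i j a r hai hrj
    rw [hΦ, hs, hsmul]
    exact SetLike.mul_mem_graded hai (hpmem j r hrj)
end

section
/- Let G be a finite group acting by graded automorphisms on a Cohen–Macaulay ℕ-graded connected finitely generated k-algebra R with char k coprime to |G|, and ϑ_1,…,ϑ_n a G-invariant homogeneous system of parameters. Then R is isomorphic to (R/(ϑ)R) ⊗_k k[ϑ_1,…,ϑ_n] as ℕ-graded G-equivariant k[ϑ_1,…,ϑ_n]-modules. -/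
open TensorProduct

set_option synthInstance.maxHeartbeats 1000000
set_option maxHeartbeats 1000000

set_option maxHeartbeats 4000000 in
/-- Let `G` be a finite group acting by graded automorphisms on a
Cohen–Macaulay (i.e. free over its parameter subring) ℕ-graded connected
finitely generated `k`-algebra `R`, with `char k` coprime to `|G|`, and let
`ϑ₁,…,ϑₙ` be a `G`-invariant homogeneous system of parameters.  Then `R` is
isomorphic to `k[ϑ] ⊗_k (R/(ϑ)R)` as ℕ-graded `G`-equivariant
`k[ϑ]`-modules, with `G` acting via the quotient factor and `k[ϑ]` via the
other factor. -/
theorem stmt_10 (k R G : Type) [Field k] [CommRing R] [Algebra k R]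
    [Group G] [Finite G]
    [MulSemiringAction G R] [SMulCommClass G k R]
    (𝒜 : ℕ → Submodule k R) [GradedAlgebra 𝒜]
    (hconn : ∀ x ∈ 𝒜 0, ∃ c : k, x = algebraMap k R c)
    (hfg : Algebra.FiniteType k R)
    (hchar : (Nat.card G : k) ≠ 0)
    (hGgraded : ∀ (g : G) (d : ℕ), ∀ x ∈ 𝒜 d, g • x ∈ 𝒜 d)
    (n : ℕ) (ϑ : Fin n → R)
    (hhom : ∀ i, ∃ d, 0 < d ∧ ϑ i ∈ 𝒜 d)
    (hind : AlgebraicIndependent k ϑ)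
    (hfin : Module.Finite (↥(Algebra.adjoin k (Set.range ϑ))) R)
    (hfree : Module.Free (↥(Algebra.adjoin k (Set.range ϑ))) R)
    (hinv : ∀ (g : G) (i : Fin n), g • ϑ i = ϑ i) :
    ∃ Φ : (↥(Algebra.adjoin k (Set.range ϑ)) ⊗[k] (R ⧸ Ideal.span (Set.range ϑ)))
        ≃ₗ[↥(Algebra.adjoin k (Set.range ϑ))] R,
      (∀ (g : G) (a : ↥(Algebra.adjoin k (Set.range ϑ))) (r : R),
        Φ (a ⊗ₜ[k] Ideal.Quotient.mk (Ideal.span (Set.range ϑ)) (g • r)) =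
          g • Φ (a ⊗ₜ[k] Ideal.Quotient.mk (Ideal.span (Set.range ϑ)) r)) ∧
      (∀ (i j : ℕ) (a : ↥(Algebra.adjoin k (Set.range ϑ))) (r : R),
        (a : R) ∈ 𝒜 i → r ∈ 𝒜 j →
          Φ (a ⊗ₜ[k] Ideal.Quotient.mk (Ideal.span (Set.range ϑ)) r) ∈ 𝒜 (i + j)) := by
  classical
  have : Fintype G := Fintype.ofFinite G
  set I : Ideal R := Ideal.span (Set.range ϑ) with hIdef
  have hIhom : I.IsHomogeneous 𝒜 := by
    apply Ideal.homogeneous_span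
    rintro _ ⟨i, rfl⟩
    obtain ⟨d, _, hd⟩ := hhom i
    exact ⟨d, hd⟩
  -- complements
  have hex : ∀ d : ℕ, ∃ C, IsCompl ((I.restrictScalars k).comap (𝒜 d).subtype) C :=
    fun d => Submodule.exists_isCompl _
  choose C hC using hex
  set π : ∀ d : ℕ, 𝒜 d →ₗ[k] R := fun d =>
    (𝒜 d).subtype ∘ₗ (C d).subtype ∘ₗ Submodule.projectionOnto (C d) _ (hC d).symm
    with hπdef
  have hπI : ∀ (d : ℕ) (y : 𝒜 d), (y : R) ∈ I → π d y = 0 := by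
    intro d y hy
    have hy' : y ∈ Submodule.comap (𝒜 d).subtype (I.restrictScalars k) := hy
    simp only [hπdef, LinearMap.comp_apply]
    rw [Submodule.linearProjOfIsCompl_apply_right' (hC d).symm hy']
    simp
  have hπsub : ∀ (d : ℕ) (y : 𝒜 d), (y : R) - π d y ∈ I := by
    intro d y
    set pr := Submodule.projectionOnto (C d)
      (Submodule.comap (𝒜 d).subtype (I.restrictScalars k)) (hC d).symm with hpr
    have hker : y - ((pr y : 𝒜 d)) ∈
        Submodule.comap (𝒜 d).subtype (I.restrictScalars k) := by
      rw [← Submodule.projectionOnto_apply_eq_zero_iff (hC d).symm]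
      rw [map_sub]
      simp only [hpr, Submodule.projectionOnto_apply_left, sub_self]
    have : (y : R) - π d y = ((y - ((pr y : 𝒜 d)) : 𝒜 d) : R) := by
      simp [hπdef, hpr]
    rw [this]
    exact hker
  have hπmem : ∀ (d : ℕ) (y : 𝒜 d), π d y ∈ 𝒜 d := by
    intro d y
    simp only [hπdef, LinearMap.comp_apply, Submodule.coe_subtype]
    exact ((C d).subtype _).2
  set t : R →ₗ[k] R :=
    (DirectSum.toModule k ℕ R π) ∘ₗ (DirectSum.decomposeLinearEquiv 𝒜).toLinearMap with htdef
  have ht1 : ∀ (j : ℕ) (x : R) (hx : x ∈ 𝒜 j), t x = π j ⟨x, hx⟩ := by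
    intro j x hx
    simp only [htdef, LinearMap.comp_apply, LinearEquiv.coe_coe,
      DirectSum.decomposeLinearEquiv_apply]
    rw [DirectSum.decompose_of_mem 𝒜 hx, ← DirectSum.lof_eq_of k, DirectSum.toModule_lof]
  have ht2 : ∀ (j : ℕ) (x : R), x ∈ 𝒜 j → t x ∈ 𝒜 j := by
    intro j x hx
    rw [ht1 j x hx]; exact hπmem j _
  have ht3 : ∀ x ∈ I, t x = 0 := by
    intro x hx
    have hrw : t x = ∑ d ∈ (DirectSum.decompose 𝒜 x).support,
        t ((DirectSum.decompose 𝒜 x d : R)) := by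
      conv_lhs => rw [← DirectSum.sum_support_decompose 𝒜 x]
      exact map_sum t _ _
    rw [hrw]
    apply Finset.sum_eq_zero
    intro d _
    rw [ht1 d _ (DirectSum.decompose 𝒜 x d).2]
    exact hπI d _ (hIhom d hx)
  have ht4 : ∀ x : R, x - t x ∈ I := by
    intro x
    have hrw : x - t x = ∑ d ∈ (DirectSum.decompose 𝒜 x).support,
        ((DirectSum.decompose 𝒜 x d : R) - t ((DirectSum.decompose 𝒜 x d : R))) := by
      rw [Finset.sum_sub_distrib, ← map_sum, DirectSum.sum_support_decompose 𝒜 x]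
    rw [hrw]
    apply Submodule.sum_mem
    intro d _
    rw [ht1 d _ (DirectSum.decompose 𝒜 x d).2]
    exact hπsub d _
  -- G-stability of I
  have hgI : ∀ (g : G) (x : R), x ∈ I → g • x ∈ I := by
    intro g x hx
    have : g • x = MulSemiringAction.toRingHom G R g x := rfl
    rw [this]
    have hmap : I.map (MulSemiringAction.toRingHom G R g) = I := by
      rw [hIdef, Ideal.map_span]
      congr 1
      rw [← Set.range_comp]
      have : (⇑(MulSemiringAction.toRingHom G R g)) ∘ ϑ = ϑ := funext fun i => hinv g i
      rw [this]
    rw [← hmap]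
    exact Ideal.mem_map_of_mem _ hx
  set c : k := (Nat.card G : k)⁻¹ with hcdef
  set u : R →ₗ[k] R := c • ∑ g : G,
    (DistribSMul.toLinearMap k R (g⁻¹ : G)) ∘ₗ t ∘ₗ (DistribSMul.toLinearMap k R g)
    with hudef
  have huapp : ∀ x : R, u x = c • ∑ g : G, g⁻¹ • t (g • x) := by
    intro x
    simp [hudef, LinearMap.smul_apply, LinearMap.sum_apply, DistribSMul.toLinearMap_apply]
  have hcard : c • ((Nat.card G : k) • (1 : R)) = 1 := by
    rw [smul_smul, hcdef, inv_mul_cancel₀ hchar, one_smul]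
  have hu1 : ∀ (j : ℕ) (x : R), x ∈ 𝒜 j → u x ∈ 𝒜 j := by
    intro j x hx
    rw [huapp]
    exact Submodule.smul_mem _ _ (Submodule.sum_mem _ fun g _ =>
      hGgraded g⁻¹ j _ (ht2 j _ (hGgraded g j x hx)))
  have hu2 : ∀ x ∈ I, u x = 0 := by
    intro x hx
    rw [huapp]
    have : ∀ g : G, g⁻¹ • t (g • x) = 0 := by
      intro g
      rw [ht3 _ (hgI g x hx), smul_zero]
    simp [this]
  have hu3 : ∀ x : R, x - u x ∈ I := by
    intro x
    have hx : x = c • ∑ g : G, g⁻¹ • (g • x) := by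
      simp only [inv_smul_smul, Finset.sum_const, Finset.card_univ]
      rw [← Nat.card_eq_fintype_card, ← Nat.cast_smul_eq_nsmul k, smul_smul,
        hcdef, inv_mul_cancel₀ hchar, one_smul]
    have expand : c • ∑ g : G, g⁻¹ • (g • x - t (g • x)) =
        (c • ∑ g : G, g⁻¹ • (g • x)) - c • ∑ g : G, g⁻¹ • t (g • x) := by
      rw [← smul_sub, ← Finset.sum_sub_distrib]
      congr 1
      exact Finset.sum_congr rfl fun g _ => smul_sub _ _ _
    have : x - u x = c • ∑ g : G, g⁻¹ • (g • x - t (g • x)) := by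
      rw [huapp, expand, ← hx]
    rw [this]
    refine Submodule.smul_mem (I.restrictScalars k) c
      (Submodule.sum_mem _ fun g _ => ?_)
    exact hgI g⁻¹ _ (ht4 (g • x))
  have hu4 : ∀ (h : G) (x : R), u (h • x) = h • u x := by
    intro h x
    rw [huapp, huapp]
    have key : ∀ g : G, g⁻¹ • t ((g * h) • x) = h • ((g * h)⁻¹ • t ((g * h) • x)) := by
      intro g
      rw [mul_inv_rev]
      rw [mul_smul h⁻¹ g⁻¹]
      rw [smul_inv_smul]
    have : ∑ g : G, g⁻¹ • t (g • h • x) = ∑ g : G, h • (g⁻¹ • t (g • x)) := by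
      refine Fintype.sum_equiv (Equiv.mulRight h) _ _ fun g => ?_
      simp only [Equiv.coe_mulRight]
      rw [← mul_smul g h x, key g]
    rw [this, ← Finset.smul_sum]
    exact (smul_comm h c _).symm
  -- the section on the quotient
  have hle : I.restrictScalars k ≤ LinearMap.ker u := fun x hx => hu2 x hx
  set s : (R ⧸ I) →ₗ[k] R :=
    (Submodule.liftQ (I.restrictScalars k) u hle) ∘ₗ
      (Submodule.Quotient.restrictScalarsEquiv k I).symm.toLinearMap with hsdef
  have hs : ∀ r : R, s (Ideal.Quotient.mk I r) = u r := by
    intro r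
    have h1 : (Submodule.Quotient.restrictScalarsEquiv k I).symm
        (Ideal.Quotient.mk I r) = Submodule.Quotient.mk r := by
      apply (Submodule.Quotient.restrictScalarsEquiv k I).injective
      simp [← Ideal.Quotient.mk_eq_mk]
    simp only [hsdef, LinearMap.comp_apply, LinearEquiv.coe_coe, h1]
    exact Submodule.liftQ_apply _ _ _
  set A := Algebra.adjoin k (Set.range ϑ) with hAdef
  set Φ₀ : (↥A ⊗[k] (R ⧸ I)) →ₗ[↥A] R := LinearMap.liftBaseChange ↥A s with hΦ₀def
  have hΦ₀ : ∀ (a : ↥A) (r : R),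
      Φ₀ (a ⊗ₜ[k] Ideal.Quotient.mk I r) = (a : R) * u r := by
    intro a r
    rw [hΦ₀def, LinearMap.liftBaseChange_tmul, hs]
    rw [Algebra.smul_def]
    rfl
  -- surjectivity by induction on degree
  have hθA : ∀ i, ϑ i ∈ A := fun i => Algebra.subset_adjoin (Set.mem_range_self i)
  set θA : Fin n → ↥A := fun i => ⟨ϑ i, hθA i⟩ with hθAdef
  choose deg hdegpos hdegmem using hhom
  have hNdeg : ∀ d : ℕ, ∀ x ∈ 𝒜 d, x ∈ LinearMap.range Φ₀ := by
    intro d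
    induction d using Nat.strong_induction_on with
    | _ d IH =>
      intro x hx
      have hux : u x ∈ LinearMap.range Φ₀ :=
        ⟨(1 : ↥A) ⊗ₜ[k] Ideal.Quotient.mk I x, by rw [hΦ₀]; simp⟩
      have hy : x - u x ∈ I := hu3 x
      set y := x - u x with hydef
      have hyd : y ∈ 𝒜 d := Submodule.sub_mem _ hx (hu1 d x hx)
      obtain ⟨co, hco⟩ := Ideal.mem_span_range_iff_exists_fun.mp hy
      have hproj : y = ∑ i, (DirectSum.decompose 𝒜 (co i * ϑ i) d : R) := by
        calc y = (DirectSum.decompose 𝒜 y d : R) :=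
              (DirectSum.decompose_of_mem_same 𝒜 hyd).symm
          _ = _ := by
              rw [← hco, DirectSum.decompose_sum, DFinsupp.finset_sum_apply,
                AddSubmonoidClass.coe_finset_sum]
      have hymem : y ∈ LinearMap.range Φ₀ := by
        rw [hproj]
        apply Submodule.sum_mem
        intro i _
        by_cases hle : deg i ≤ d
        · have hmul := DirectSum.coe_decompose_mul_of_right_mem_of_le (𝒜 := 𝒜)
            (a := co i) (hdegmem i) hle
          rw [hmul]
          have hlt : d - deg i < d := by
            have := hdegpos i
            omega
          have hz : (DirectSum.decompose 𝒜 (co i) (d - deg i) : R) ∈ LinearMap.range Φ₀ :=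
            IH _ hlt _ (DirectSum.decompose 𝒜 (co i) (d - deg i)).2
          have : (DirectSum.decompose 𝒜 (co i) (d - deg i) : R) * ϑ i =
              θA i • (DirectSum.decompose 𝒜 (co i) (d - deg i) : R) := by
            rw [Algebra.smul_def, mul_comm]
            rfl
          rw [this]
          exact Submodule.smul_mem _ _ hz
        · have hmul := DirectSum.coe_decompose_mul_of_right_mem_of_not_le (𝒜 := 𝒜)
            (a := co i) (hdegmem i) hle
          rw [hmul]
          exact Submodule.zero_mem _
      have : x = u x + y := by rw [hydef]; ring
      rw [this]
      exact Submodule.add_mem _ hux hymem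
  have hsurj : Function.Surjective Φ₀ := by
    rw [← LinearMap.range_eq_top, eq_top_iff]
    intro r _
    rw [← DirectSum.sum_support_decompose 𝒜 r]
    exact Submodule.sum_mem _ fun d _ => hNdeg d _ (DirectSum.decompose 𝒜 r d).2
  -- algebraic independence consequences
  set E := hind.aevalEquiv with hEdef
  set J : Ideal ↥A := Ideal.span (Set.range θA) with hJdef
  have hEX : ∀ i, E (MvPolynomial.X i) = θA i := by
    intro i
    apply Subtype.ext
    have h1 : ((E (MvPolynomial.X i) : ↥A) : R) =
        MvPolynomial.aeval ϑ (MvPolynomial.X i) := hind.algebraMap_aevalEquiv _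
    rw [h1, MvPolynomial.aeval_X]
  have hXJ : ∀ p ∈ Ideal.span (Set.range (MvPolynomial.X (R := k) (σ := Fin n))),
      E p ∈ J := by
    intro p hp
    have hmap : Ideal.map (E.toAlgHom.toRingHom)
        (Ideal.span (Set.range (MvPolynomial.X (R := k) (σ := Fin n)))) = J := by
      rw [Ideal.map_span, hJdef]
      congr 1
      rw [← Set.range_comp]
      have : (⇑E.toAlgHom.toRingHom ∘ MvPolynomial.X) = θA := funext fun i => hEX i
      rw [this]
    rw [← hmap]
    exact Ideal.mem_map_of_mem _ hp
  have hJX : ∀ a ∈ J, E.symm a ∈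
      Ideal.span (Set.range (MvPolynomial.X (R := k) (σ := Fin n))) := by
    intro a ha
    have hmap : Ideal.map (E.symm.toAlgHom.toRingHom) J =
        Ideal.span (Set.range (MvPolynomial.X (R := k) (σ := Fin n))) := by
      rw [Ideal.map_span]
      congr 1
      rw [← Set.range_comp]
      have : (⇑E.symm.toAlgHom.toRingHom ∘ θA) = MvPolynomial.X := by
        funext i
        have : E.symm (θA i) = E.symm (E (MvPolynomial.X i)) := by rw [hEX i]
        simpa using this
      rw [this]
    rw [← hmap]
    exact Ideal.mem_map_of_mem _ ha
  have hconst : ∀ p : MvPolynomial (Fin n) k,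
      p - MvPolynomial.C (MvPolynomial.constantCoeff p) ∈
        Ideal.span (Set.range (MvPolynomial.X (R := k) (σ := Fin n))) := by
    intro p
    induction p using MvPolynomial.induction_on with
    | C a => simp
    | add p q hp hq =>
        have : p + q - MvPolynomial.C (MvPolynomial.constantCoeff (p + q)) =
            (p - MvPolynomial.C (MvPolynomial.constantCoeff p)) +
              (q - MvPolynomial.C (MvPolynomial.constantCoeff q)) := by
          rw [map_add, map_add]; ring
        rw [this]
        exact Ideal.add_mem _ hp hq
    | mul_X p i hp =>
        have h0 : MvPolynomial.constantCoeff (p * MvPolynomial.X i) = 0 := by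
          simp
        rw [h0, map_zero, sub_zero]
        exact Ideal.mul_mem_left _ _ (Ideal.subset_span ⟨i, rfl⟩)
  have hsplit : ∀ a : ↥A, ∃ c : k, a - algebraMap k ↥A c ∈ J := by
    intro a
    obtain ⟨p, hp⟩ := E.surjective a
    refine ⟨MvPolynomial.constantCoeff p, ?_⟩
    have : a - algebraMap k ↥A (MvPolynomial.constantCoeff p) =
        E (p - MvPolynomial.C (MvPolynomial.constantCoeff p)) := by
      rw [map_sub, hp]
      congr 1
      rw [show (MvPolynomial.C (MvPolynomial.constantCoeff p) :
        MvPolynomial (Fin n) k) = algebraMap k _ (MvPolynomial.constantCoeff p) from rfl]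
      rw [AlgEquiv.commutes]
    rw [this]
    exact hXJ _ (hconst p)
  have hJzero : ∀ c : k, algebraMap k ↥A c ∈ J → c = 0 := by
    intro c hc
    have h2 := hJX _ hc
    have h1 : E.symm (algebraMap k ↥A c) = MvPolynomial.C c := by
      rw [AlgEquiv.commutes]
      rfl
    rw [h1] at h2
    have hle : Ideal.span (Set.range (MvPolynomial.X (R := k) (σ := Fin n))) ≤
        RingHom.ker (MvPolynomial.constantCoeff (R := k) (σ := Fin n)) := by
      rw [Ideal.span_le]
      rintro _ ⟨i, rfl⟩
      simp [RingHom.mem_ker]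
    have h3 := hle h2
    rw [RingHom.mem_ker] at h3
    simpa using h3
  have hJI : ∀ a : ↥A, a ∈ J → (a : R) ∈ I := by
    intro a ha
    have hmap : Ideal.map (A.val.toRingHom) J = I := by
      rw [Ideal.map_span]
      have himg : (⇑A.val.toRingHom '' Set.range θA) = Set.range ϑ := by
        rw [← Set.range_comp]
        exact congrArg Set.range (funext fun i => rfl)
      rw [himg]
    rw [← hmap]
    exact Ideal.mem_map_of_mem _ ha
  -- basis of the quotient
  set ι := Module.Free.ChooseBasisIndex ↥A R with hιdef
  set b : Module.Basis ι ↥A R := Module.Free.chooseBasis ↥A R with hbdef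
  set qb : ι → (R ⧸ I) := fun i => Ideal.Quotient.mk I (b i) with hqbdef
  have hmk_smul : ∀ (cc : k) (r : R),
      Ideal.Quotient.mk I (cc • r) = cc • Ideal.Quotient.mk I r := by
    intro cc r
    rw [← Ideal.Quotient.mkₐ_eq_mk k I, map_smul]
  have hq_top : ⊤ ≤ Submodule.span k (Set.range qb) := by
    rintro m -
    obtain ⟨r, rfl⟩ := Ideal.Quotient.mk_surjective (I := I) m
    have hr : r = ∑ i, b.repr r i • b i := (b.sum_repr r).symm
    choose cf hcf using fun i : ι => hsplit (b.repr r i)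
    have hkey : Ideal.Quotient.mk I r = ∑ i, cf i • qb i := by
      conv_lhs => rw [hr]
      rw [map_sum]
      refine Finset.sum_congr rfl fun i _ => ?_
      have hco : (b.repr r i) • b i = cf i • b i +
          ((b.repr r i - algebraMap k ↥A (cf i)) : ↥A) • b i := by
        rw [sub_smul, algebraMap_smul]
        ring
      rw [hco, map_add]
      have hzero : Ideal.Quotient.mk I
          (((b.repr r i - algebraMap k ↥A (cf i)) : ↥A) • b i) = 0 := by
        rw [Ideal.Quotient.eq_zero_iff_mem]
        have : ((b.repr r i - algebraMap k ↥A (cf i)) : ↥A) • b i =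
            (((b.repr r i - algebraMap k ↥A (cf i)) : ↥A) : R) * b i := by
          rw [Algebra.smul_def]; rfl
        rw [this]
        exact Ideal.mul_mem_right _ _ (hJI _ (hcf i))
      rw [hzero, add_zero, hmk_smul]
    rw [hkey]
    exact Submodule.sum_mem _ fun i _ =>
      Submodule.smul_mem _ _ (Submodule.subset_span ⟨i, rfl⟩)
  have hli : LinearIndependent k qb := by
    rw [Fintype.linearIndependent_iff]
    intro g hg i0
    have hz : (∑ i, g i • b i) ∈ I := by
      rw [← Ideal.Quotient.eq_zero_iff_mem, map_sum]
      rw [← hg]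
      exact Finset.sum_congr rfl fun i _ => hmk_smul (g i) (b i)
    obtain ⟨co, hco⟩ := Ideal.mem_span_range_iff_exists_fun.mp hz
    have happ := congrArg (fun w => (b.repr w) i0) hco
    have hL : (b.repr (∑ j, co j * ϑ j)) i0 = ∑ j, θA j * (b.repr (co j)) i0 := by
      rw [map_sum, Finset.sum_apply']
      refine Finset.sum_congr rfl fun j _ => ?_
      have : co j * ϑ j = θA j • co j := by
        rw [Algebra.smul_def]
        show _ = ϑ j * co j
        ring
      rw [this, map_smul, Finsupp.smul_apply, smul_eq_mul]
    have hR : (b.repr (∑ i, g i • b i)) i0 = algebraMap k ↥A (g i0) := by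
      rw [map_sum, Finset.sum_apply']
      rw [Finset.sum_eq_single i0]
      · rw [show g i0 • b i0 = algebraMap k ↥A (g i0) • b i0 from
          (algebraMap_smul ↥A (g i0) (b i0)).symm, map_smul, b.repr_self,
          Finsupp.smul_apply, Finsupp.single_eq_same, smul_eq_mul, mul_one]
      · intro j _ hj
        rw [show g j • b j = algebraMap k ↥A (g j) • b j from
          (algebraMap_smul ↥A (g j) (b j)).symm, map_smul, b.repr_self,
          Finsupp.smul_apply, Finsupp.single_eq_of_ne hj.symm, smul_zero]
      · intro h
        exact absurd (Finset.mem_univ i0) h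
    rw [hL, hR] at happ
    refine hJzero (g i0) ?_
    rw [← happ]
    exact Submodule.sum_mem _ fun j _ =>
      Ideal.mul_mem_right _ _ (Ideal.subset_span ⟨j, rfl⟩)
  set basisQ : Module.Basis ι k (R ⧸ I) := Module.Basis.mk hli hq_top with hbQdef
  set ψ : (↥A ⊗[k] (R ⧸ I)) ≃ₗ[↥A] R := (basisQ.baseChange ↥A).equiv b (Equiv.refl ι)
    with hψdef
  have hTfin : Module.Finite ↥A (↥A ⊗[k] (R ⧸ I)) := Module.Finite.equiv ψ.symm
  have hinj : Function.Injective Φ₀ := by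
    have hf : Function.Surjective (ψ.symm.toLinearMap ∘ₗ Φ₀) := by
      intro z
      obtain ⟨r, hr⟩ := hsurj (ψ z)
      exact ⟨r, by simp [LinearMap.comp_apply, hr]⟩
    have hfi := OrzechProperty.injective_of_surjective_endomorphism _ hf
    intro x y hxy
    exact hfi (by simp [LinearMap.comp_apply, hxy])
  -- G fixes A pointwise
  have hfix : ∀ (g : G) (x : R), x ∈ A → g • x = x := by
    intro g x hx
    induction hx using Algebra.adjoin_induction with
    | mem z hz =>
        obtain ⟨i, rfl⟩ := hz
        exact hinv g i
    | algebraMap c =>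
        rw [Algebra.algebraMap_eq_smul_one, smul_comm, smul_one]
    | add z w _ _ hz hw => rw [smul_add, hz, hw]
    | mul z w _ _ hz hw => rw [smul_mul', hz, hw]
  have hbij : Function.Bijective Φ₀ := ⟨hinj, hsurj⟩
  refine ⟨LinearEquiv.ofBijective Φ₀ hbij, ?_, ?_⟩
  · intro g a r
    rw [LinearEquiv.ofBijective_apply, LinearEquiv.ofBijective_apply, hΦ₀, hΦ₀,
      hu4, ← hfix g (a : R) a.2, ← smul_mul']
    rw [hfix g (a : R) a.2]
  · intro i j a r ha hr
    rw [LinearEquiv.ofBijective_apply, hΦ₀]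
    exact SetLike.mul_mem_graded ha (hu1 j r hr)
end

section
/- Let k be a field of characteristic 2 and n ≥ 3. Suppose M is a free module of rank 2 over the polynomial ring k[θ_1,…,θ_n] with basis {1, D}, a C_2 = ⟨τ⟩ action on M fixing 1 and with τ·D ≠ D, and another free rank-2 module M' with basis {1, D̂}, C_2 fixing 1 and τ·D̂ ≠ D̂, such that (identifying the θ-actions) (D̂ + τ·D̂)·1 corresponds to θ_1⋯θ_{n-1} times the generator 1 of M'. If φ : M' → M is a C_2-equivariant module isomorphism, then φ(1) = s·1 for a unit s ∈ k^×, and θ_1⋯θ_{n-1}·s = v·(D + τ·D) for some v in the polynomial ring; in particular D + τ·D divides θ_1⋯θ_{n-1} in k[θ_1,…,θ_n], so D + τ·D and θ_1⋯θ_{n-1} agree up to a scalar. -/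
open MvPolynomial

/-- Units of a multivariate polynomial ring over a field are constants. -/
lemma stmt_14_aux_unit {k : Type} [Field k] : ∀ {n : ℕ} {a : MvPolynomial (Fin n) k},
    IsUnit a → ∃ s : k, a = MvPolynomial.C s := by
  intro n
  induction n with
  | zero =>
    intro a _
    exact ⟨a.coeff 0, eq_C_of_isEmpty a⟩
  | succ n ih =>
    intro a ha
    have h1 : IsUnit (finSuccEquiv k n a) := ha.map _
    have h2 : finSuccEquiv k n a = Polynomial.C ((finSuccEquiv k n a).coeff 0) :=
      Polynomial.eq_C_of_degree_eq_zero (Polynomial.degree_eq_zero_of_isUnit h1)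
    have h3 : IsUnit ((finSuccEquiv k n a).coeff 0) := Polynomial.isUnit_C.mp (h2 ▸ h1)
    obtain ⟨s, hs⟩ := ih h3
    refine ⟨s, (finSuccEquiv k n).injective ?_⟩
    rw [h2, hs]
    simp [finSuccEquiv_apply]

/-- The module-theoretic step of the characteristic-2 counterexample.  Over
the polynomial ring `k[θ_1,…,θ_n]` (`char k = 2`, `n ≥ 3`), let `M` and `M'`
be free rank-2 modules with bases `{1, D}` resp. `{1, D̂}`, each with a
`C₂ = ⟨τ⟩` action fixing `1` and not fixing `D` (resp. `D̂`), and suppose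
`D̂ + τ·D̂ = θ_1⋯θ_{n-1} · 1` in `M'`.  If `φ : M' → M` is a `C₂`-equivariant
module isomorphism, then `φ(1) = s·1` for a nonzero scalar `s`, and
`θ_1⋯θ_{n-1}·s·1 = v·(D + τ·D)` for some polynomial `v`; in particular if
`D + τ·D = p·1` then `p` divides `θ_1⋯θ_{n-1}·s`, so `D + τ·D` and
`θ_1⋯θ_{n-1}` agree up to a scalar. -/
theorem stmt_14 (k : Type) [Field k] [CharP k 2] (n : ℕ) (hn : 3 ≤ n)
    (M M' : Type) [AddCommGroup M] [Module (MvPolynomial (Fin n) k) M]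
    [AddCommGroup M'] [Module (MvPolynomial (Fin n) k) M']
    (b : Module.Basis (Fin 2) (MvPolynomial (Fin n) k) M)
    (b' : Module.Basis (Fin 2) (MvPolynomial (Fin n) k) M')
    (τ : M →ₗ[MvPolynomial (Fin n) k] M)
    (τ' : M' →ₗ[MvPolynomial (Fin n) k] M')
    (hτ2 : ∀ x, τ (τ x) = x) (hτ'2 : ∀ x, τ' (τ' x) = x)
    (hτ1 : τ (b 0) = b 0) (hτD : τ (b 1) ≠ b 1)
    (hτ'1 : τ' (b' 0) = b' 0) (hτ'D : τ' (b' 1) ≠ b' 1)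
    (hkey : b' 1 + τ' (b' 1) =
      (∏ i ∈ Finset.filter (fun i : Fin n => (i : ℕ) + 1 < n) Finset.univ,
        (MvPolynomial.X i : MvPolynomial (Fin n) k)) • b' 0)
    (φ : M' ≃ₗ[MvPolynomial (Fin n) k] M)
    (hφ : ∀ x, φ (τ' x) = τ (φ x)) :
    ∃ s : k, s ≠ 0 ∧ φ (b' 0) = (MvPolynomial.C s : MvPolynomial (Fin n) k) • b 0 ∧
      (∃ v : MvPolynomial (Fin n) k,
        ((MvPolynomial.C s : MvPolynomial (Fin n) k) *
          ∏ i ∈ Finset.filter (fun i : Fin n => (i : ℕ) + 1 < n) Finset.univ,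
            (MvPolynomial.X i : MvPolynomial (Fin n) k)) • b 0 = v • (b 1 + τ (b 1))) ∧
      ∀ p : MvPolynomial (Fin n) k, b 1 + τ (b 1) = p • b 0 →
        p ∣ (MvPolynomial.C s : MvPolynomial (Fin n) k) *
          ∏ i ∈ Finset.filter (fun i : Fin n => (i : ℕ) + 1 < n) Finset.univ,
            (MvPolynomial.X i : MvPolynomial (Fin n) k) := by
  set R := MvPolynomial (Fin n) k with hR
  set Θ : R := ∏ i ∈ Finset.filter (fun i : Fin n => (i : ℕ) + 1 < n) Finset.univ,
    MvPolynomial.X i with hΘ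
  -- characteristic 2 facts
  have h2 : (2 : R) = 0 := by
    have := CharP.cast_eq_zero R 2
    exact_mod_cast this
  have char2M : ∀ x : M, x + x = 0 := by
    intro x
    calc x + x = (2 : R) • x := (two_smul R x).symm
    _ = 0 := by rw [h2, zero_smul]
  -- injectivity of coordinates
  have binj : ∀ x y x' y' : R, x • b 0 + y • b 1 = x' • b 0 + y' • b 1 → x = x' ∧ y = y' := by
    intro x y x' y' h
    have h0 := DFunLike.congr_fun (congrArg b.repr h) 0
    have h1 := DFunLike.congr_fun (congrArg b.repr h) 1
    simp [Finsupp.single_apply] at h0 h1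
    exact ⟨h0, h1⟩
  -- expansion of τ (b 1)
  set α : R := b.repr (τ (b 1)) 0 with hα
  set β : R := b.repr (τ (b 1)) 1 with hβdef
  have hτb1 : τ (b 1) = α • b 0 + β • b 1 := by
    have := b.sum_repr (τ (b 1))
    rw [Fin.sum_univ_two] at this
    exact this.symm
  -- τ² = 1 on b 1 gives β = 1 (char 2, domain)
  have hsq : α + β * α = 0 ∧ β * β = 1 := by
    have h := hτ2 (b 1)
    rw [hτb1, map_add, map_smul, map_smul, hτ1, hτb1] at h
    have h' : (α + β * α) • b 0 + (β * β) • b 1 = (0 : R) • b 0 + (1 : R) • b 1 := by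
      linear_combination (norm := module) h
    exact binj _ _ _ _ h'
  have hβ : β = 1 := by
    have hsq2 : (β + 1) * (β + 1) = 0 := by
      have : (β + 1) * (β + 1) = β * β + (2 : R) * β + 1 := by ring
      rw [this, hsq.2, h2, zero_mul, add_zero, ← h2]; ring
    have := mul_self_eq_zero.mp hsq2
    have hβ1 : β = -1 := by linear_combination this
    rw [hβ1, neg_eq_iff_add_eq_zero, ← h2]; ring
  have hτb1' : τ (b 1) = α • b 0 + b 1 := by rw [hτb1, hβ, one_smul]
  have hαne : α ≠ 0 := by
    intro h0
    apply hτD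
    rw [hτb1', h0, zero_smul, zero_add]
  have hsum : b 1 + τ (b 1) = α • b 0 := by
    rw [hτb1']
    have e : b 1 + (α • b 0 + b 1) = α • b 0 + (b 1 + b 1) := by abel
    rw [e, char2M, add_zero]
  -- expansion of φ (b' 0); equivariance forces second coordinate to vanish
  set a : R := b.repr (φ (b' 0)) 0 with ha
  set c : R := b.repr (φ (b' 0)) 1 with hc
  have hφ0 : φ (b' 0) = a • b 0 + c • b 1 := by
    have := b.sum_repr (φ (b' 0))
    rw [Fin.sum_univ_two] at this
    exact this.symm
  have hfix : τ (φ (b' 0)) = φ (b' 0) := by rw [← hφ (b' 0), hτ'1]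
  have hc0 : c = 0 := by
    have h := hfix
    rw [hφ0, map_add, map_smul, map_smul, hτ1, hτb1'] at h
    have h' : (a + c * α) • b 0 + c • b 1 = a • b 0 + c • b 1 := by
      rw [← h, smul_add, smul_smul, add_smul]; abel
    have hcα : c * α = 0 := by
      have he := (binj _ _ _ _ h').1
      linear_combination he
    exact (mul_eq_zero.mp hcα).resolve_right hαne
  have hφ0' : φ (b' 0) = a • b 0 := by rw [hφ0, hc0, zero_smul, add_zero]
  -- a is a unit
  have hunit : IsUnit a := by
    have h5 : b' 0 = a • φ.symm (b 0) := by
      rw [← map_smul, ← hφ0', φ.symm_apply_apply]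
    have h6 := DFunLike.congr_fun (congrArg b'.repr h5) 0
    simp [Finsupp.single_apply] at h6
    exact IsUnit.of_mul_eq_one (a := a) _ h6.symm
  obtain ⟨s, hCs⟩ := stmt_14_aux_unit hunit
  have hs0 : s ≠ 0 := by
    intro h0
    rw [h0, map_zero] at hCs
    exact hunit.ne_zero hCs
  -- expansion of φ (b' 1) and the key relation
  set u : R := b.repr (φ (b' 1)) 0 with hu
  set w : R := b.repr (φ (b' 1)) 1 with hw
  have hφ1 : φ (b' 1) = u • b 0 + w • b 1 := by
    have := b.sum_repr (φ (b' 1))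
    rw [Fin.sum_univ_two] at this
    exact this.symm
  have h6 : φ (b' 1) + τ (φ (b' 1)) = (Θ * a) • b 0 := by
    rw [← hφ (b' 1), ← map_add, hkey, map_smul, hφ0', smul_smul]
  have h7 : φ (b' 1) + τ (φ (b' 1)) = (w * α) • b 0 := by
    rw [hφ1, map_add, map_smul, map_smul, hτ1, hτb1']
    have e1 : u • b 0 + w • b 1 + (u • b 0 + w • (α • b 0 + b 1)) =
        (u • b 0 + u • b 0) + (w • b 1 + w • b 1) + (w * α) • b 0 := by
      rw [smul_add, smul_smul]; abel
    rw [e1, char2M, char2M, zero_add, zero_add]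
  have hwα : w * α = Θ * a := by
    have h8 : (w * α) • b 0 + (0 : R) • b 1 = (Θ * a) • b 0 + (0 : R) • b 1 := by
      rw [zero_smul, add_zero, add_zero, ← h7, h6]
    exact (binj _ _ _ _ h8).1
  refine ⟨s, hs0, by rw [hφ0', hCs], ⟨w, ?_⟩, ?_⟩
  · rw [hsum, smul_smul]
    congr 1
    rw [← hCs]
    linear_combination -hwα
  · intro p hp
    have hpα : p = α := by
      have h9 : p • b 0 + (0 : R) • b 1 = α • b 0 + (0 : R) • b 1 := by
        rw [zero_smul, add_zero, add_zero, ← hp, hsum]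
      exact (binj _ _ _ _ h9).1
    refine ⟨w, ?_⟩
    rw [hpα, ← hCs]
    linear_combination -hwα
end

section
/- Let k be a field of characteristic 2, d ≥ 2, n = d+1. In k[x_0,…,x_d], the S_{n}-orbit sum of the monomial x_1 x_2^2 ⋯ x_d^d (equivalently, D + τ·D where D is the alternating-group orbit sum and τ any odd permutation) is not a scalar multiple of the product θ_1 θ_2 ⋯ θ_d of elementary symmetric polynomials: the latter contains the monomial x_0 x_1 x_2 · ∏_{i=2}^{d-1}(x_0⋯x_i) with coefficient 3 ≡ 1 (mod 2), a monomial not appearing in the orbit sum. -/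
open Finset MvPolynomial

noncomputable def badExp (d : ℕ) : Fin (d + 1) →₀ ℕ :=
  Finsupp.single (0 : Fin (d + 1)) 1 + Finsupp.single 1 1 + Finsupp.single 2 1 +
    ∑ i ∈ Finset.Icc 2 (d - 1), ∑ j ∈ Finset.range (i + 1),
      Finsupp.single ((Fin.ofNat (d + 1) j : Fin (d + 1))) 1

noncomputable def orbitSum (k : Type) [Field k] (d : ℕ) : MvPolynomial (Fin (d + 1)) k :=
  ∑ σ : Equiv.Perm (Fin (d + 1)),
    MvPolynomial.rename σ (∏ i : Fin (d + 1), MvPolynomial.X i ^ (i : ℕ))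

noncomputable def indic {n : ℕ} (S : Finset (Fin n)) : Fin n →₀ ℕ :=
  ∑ i ∈ S, Finsupp.single i 1

lemma indic_apply {n : ℕ} (S : Finset (Fin n)) (m : Fin n) :
    indic S m = if m ∈ S then 1 else 0 := by
  classical
  simp [indic, Finsupp.finset_sum_apply, Finsupp.single_apply, Finset.sum_ite_eq]

lemma indic_support {n : ℕ} (S : Finset (Fin n)) : (indic S).support = S := by
  ext m
  simp [Finsupp.mem_support_iff, indic_apply]

lemma indic_inj {n : ℕ} {S T : Finset (Fin n)} (h : indic S = indic T) : S = T := by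
  rw [← indic_support S, ← indic_support T, h]

lemma coeff_esymm_indic {k : Type} [Field k] {n j : ℕ} (S : Finset (Fin n)) :
    MvPolynomial.coeff (indic S) (esymm (Fin n) k j) = if S.card = j then 1 else 0 := by
  classical
  rw [esymm_eq_sum_monomial]
  rw [MvPolynomial.coeff_sum]
  simp_rw [coeff_monomial]
  have hfold : ∀ T : Finset (Fin n), (∑ i ∈ T, Finsupp.single i (1:ℕ)) = indic T :=
    fun _ => rfl
  simp_rw [hfold]
  split_ifs with h
  · rw [Finset.sum_eq_single S]
    · rw [if_pos rfl]
    · intro T hT hTS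
      rw [if_neg fun he => hTS (indic_inj he)]
    · intro hS
      exact absurd (Finset.mem_powersetCard_univ.mpr h) hS
  · apply Finset.sum_eq_zero
    intro T hT
    rw [if_neg]
    intro he
    have := indic_inj he
    subst this
    exact h (Finset.mem_powersetCard_univ.mp hT)

noncomputable def rExp (d t : ℕ) : Fin (d+1) →₀ ℕ :=
  Finsupp.equivFunOnFinite.symm (fun m => t - (if (m:ℕ) ≤ 2 then 1 else (m:ℕ)))

lemma rExp_apply (d t : ℕ) (m : Fin (d+1)) :
    rExp d t m = t - (if (m:ℕ) ≤ 2 then 1 else (m:ℕ)) := rfl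

lemma badExp_eq_rExp (d : ℕ) (hd : 2 ≤ d) : badExp d = rExp d d := by
  obtain ⟨e, rfl⟩ : ∃ e, d = e + 2 := ⟨d - 2, by omega⟩
  ext m
  rw [badExp, rExp_apply]
  simp only [Finsupp.add_apply, Finsupp.finset_sum_apply, Finsupp.single_apply]
  have key : ∀ i ∈ Finset.Icc 2 (e + 2 - 1),
      (∑ j ∈ Finset.range (i + 1),
        if ((Fin.ofNat (e + 2 + 1) j : Fin (e + 2 + 1)) = m) then (1:ℕ) else 0)
      = if (m:ℕ) ≤ i then 1 else 0 := by
    intro i hi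
    simp only [Finset.mem_Icc] at hi
    have hcond : ∀ j ∈ Finset.range (i+1), ((Fin.ofNat (e + 2 + 1) j : Fin (e + 2 + 1)) = m) ↔ j = (m:ℕ) := by
      intro j hj
      simp only [Finset.mem_range] at hj
      rw [Fin.ext_iff, Fin.val_ofNat, Nat.mod_eq_of_lt (by omega)]
    rw [Finset.sum_congr rfl (fun j hj => by rw [if_congr (hcond j hj) rfl rfl])]
    rw [Finset.sum_ite_eq' (Finset.range (i+1)) (m:ℕ) (fun _ => (1:ℕ))]
    simp only [Finset.mem_range]
    exact if_congr (by omega) rfl rfl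
  rw [Finset.sum_congr rfl key]
  rw [Finset.sum_ite, Finset.sum_const, Finset.sum_const]
  have hfil : Finset.filter (fun i => (m:ℕ) ≤ i) (Finset.Icc 2 (e + 2 - 1))
      = Finset.Icc (max 2 (m:ℕ)) (e + 2 - 1) := by
    ext i
    simp only [Finset.mem_filter, Finset.mem_Icc, le_max_iff, max_le_iff]
    omega
  rw [hfil, Nat.card_Icc]
  have hm : (m:ℕ) < e + 2 + 1 := m.isLt
  have h0 : ((0 : Fin (e+2+1)) : ℕ) = 0 := rfl
  have h1 : ((1 : Fin (e+2+1)) : ℕ) = 1 := rfl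
  have h2 : ((2 : Fin (e+2+1)) : ℕ) = 2 := rfl
  have e0 : ((0 : Fin (e+2+1)) = m) ↔ (m:ℕ) = 0 := by rw [Fin.ext_iff, h0]; omega
  have e1 : ((1 : Fin (e+2+1)) = m) ↔ (m:ℕ) = 1 := by rw [Fin.ext_iff, h1]; omega
  have e2 : ((2 : Fin (e+2+1)) = m) ↔ (m:ℕ) = 2 := by rw [Fin.ext_iff, h2]; omega
  rw [if_congr e0 rfl rfl, if_congr e1 rfl rfl, if_congr e2 rfl rfl]
  simp only [smul_eq_mul, mul_one, Nat.not_lt]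
  split_ifs <;> omega

def Sset (d t : ℕ) : Finset (Fin (d+1)) :=
  Finset.filter (fun m => (m:ℕ) < t) Finset.univ

lemma mem_Sset {d t : ℕ} {m : Fin (d+1)} : m ∈ Sset d t ↔ (m:ℕ) < t := by
  simp [Sset]

lemma card_Sset (d t : ℕ) (ht : t ≤ d + 1) : (Sset d t).card = t := by
  have : Sset d t = Finset.map (Fin.castLEEmb ht) Finset.univ := by
    ext m
    simp only [mem_Sset, Finset.mem_map, Finset.mem_univ, true_and]
    constructor
    · intro h
      exact ⟨⟨(m:ℕ), h⟩, by simp [Fin.castLEEmb, Fin.ext_iff]⟩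
    · rintro ⟨j, rfl⟩
      simpa [Fin.castLEEmb] using j.isLt
  rw [this, Finset.card_map, Finset.card_univ, Fintype.card_fin]

lemma support_rExp (d t : ℕ) (h3 : 3 ≤ t) :
    (rExp d t).support = Sset d t := by
  ext m
  rw [Finsupp.mem_support_iff, mem_Sset, rExp_apply]
  split_ifs with h <;> omega

lemma indic_le_rExp (d t : ℕ) (h2 : 2 ≤ t) :
    indic (Sset d (t+1)) ≤ rExp d (t+1) := by
  rw [Finsupp.le_def]
  intro m
  rw [indic_apply, rExp_apply]; simp only [mem_Sset]
  split_ifs <;> omega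

lemma rExp_sub (d t : ℕ) (h2 : 2 ≤ t) :
    rExp d (t+1) - indic (Sset d (t+1)) = rExp d t := by
  ext m
  rw [Finsupp.tsub_apply, indic_apply, rExp_apply, rExp_apply]; simp only [mem_Sset]
  split_ifs <;> omega

lemma rExp_two (d : ℕ) : rExp d 2 = indic (Sset d 3) := by
  ext m
  rw [indic_apply, rExp_apply]; simp only [mem_Sset]
  split_ifs <;> omega

lemma subset_of_indic_le {n : ℕ} {S : Finset (Fin n)} {μ : Fin n →₀ ℕ}
    (h : indic S ≤ μ) : S ⊆ μ.support := by
  intro i hi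
  rw [Finsupp.mem_support_iff]
  have := Finsupp.le_def.mp h i
  rw [indic_apply, if_pos hi] at this
  omega

lemma indic_sub_single {n : ℕ} {S : Finset (Fin n)} {i : Fin n} (hi : i ∈ S) :
    indic S - Finsupp.single i 1 = indic (S.erase i) := by
  ext m
  rw [Finsupp.tsub_apply, indic_apply, indic_apply, Finsupp.single_apply]
  by_cases him : i = m
  · subst him
    simp [hi]
  · simp only [him, if_false, Finset.mem_erase, Nat.sub_zero]
    exact if_congr (by tauto) rfl rfl

lemma base_case (k : Type) [Field k] (d : ℕ) (hd : 2 ≤ d) :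
    MvPolynomial.coeff (rExp d 2)
      (∏ j ∈ Finset.Icc 1 2, esymm (Fin (d+1)) k j) = 3 := by
  have hIcc : Finset.Icc 1 2 = ({1, 2} : Finset ℕ) := rfl
  rw [hIcc, Finset.prod_insert (by decide), Finset.prod_singleton]
  rw [rExp_two, esymm_one, Finset.sum_mul, MvPolynomial.coeff_sum]
  have hterm : ∀ i : Fin (d+1),
      MvPolynomial.coeff (indic (Sset d 3)) (X i * esymm (Fin (d+1)) k 2)
      = if i ∈ Sset d 3 then 1 else 0 := by
    intro i
    rw [mul_comm, MvPolynomial.coeff_mul_X']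
    rw [indic_support]
    split_ifs with h
    · rw [indic_sub_single h, coeff_esymm_indic, if_pos]
      rw [Finset.card_erase_of_mem h, card_Sset d 3 (by omega)]
    · rfl
  rw [Finset.sum_congr rfl (fun i _ => hterm i)]
  rw [Finset.sum_ite_mem, Finset.univ_inter, Finset.sum_const,
    card_Sset d 3 (by omega)]
  simp

lemma coeff_rExp_prod (k : Type) [Field k] (d : ℕ) (hd : 2 ≤ d) (t : ℕ)
    (h2 : 2 ≤ t) (htd : t ≤ d) :
    MvPolynomial.coeff (rExp d t)
      (∏ j ∈ Finset.Icc 1 t, esymm (Fin (d+1)) k j) = 3 := by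
  induction t, h2 using Nat.le_induction with
  | base => exact base_case k d hd
  | succ t ht ih =>
    rw [Finset.prod_Icc_succ_top (by omega : 1 ≤ t + 1)]
    rw [esymm_eq_sum_monomial, Finset.mul_sum, MvPolynomial.coeff_sum]
    have hfold : ∀ T : Finset (Fin (d+1)),
        (∑ i ∈ T, Finsupp.single i (1:ℕ)) = indic T := fun _ => rfl
    simp_rw [coeff_mul_monomial', hfold]
    rw [Finset.sum_eq_single (Sset d (t+1))]
    · rw [if_pos (indic_le_rExp d t ht), rExp_sub d t ht, mul_one]
      exact ih (by omega)
    · intro T hT hTne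
      rw [Finset.mem_powersetCard_univ] at hT
      rw [if_neg]
      intro hle
      apply hTne
      have hsub : T ⊆ Sset d (t+1) := by
        have := subset_of_indic_le hle
        rwa [support_rExp d (t+1) (by omega)] at this
      exact Finset.eq_of_subset_of_card_le hsub
        (by rw [hT, card_Sset d (t+1) (by omega)])
    · intro hS
      exact absurd (Finset.mem_powersetCard_univ.mpr
        (card_Sset d (t+1) (by omega))) hS

noncomputable def eVec (d : ℕ) : Fin (d+1) →₀ ℕ :=
  Finsupp.equivFunOnFinite.symm (fun i => (i:ℕ))

lemma eVec_apply (d : ℕ) (i : Fin (d+1)) : eVec d i = (i:ℕ) := rfl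

lemma prod_X_eq (k : Type) [Field k] (d : ℕ) :
    (∏ i : Fin (d+1), (X i : MvPolynomial (Fin (d+1)) k) ^ (i:ℕ))
      = monomial (eVec d) 1 := by
  rw [← prod_X_pow_eq_monomial]
  have : ∀ i : Fin (d+1), (X i : MvPolynomial (Fin (d+1)) k) ^ (i:ℕ)
      = X i ^ (eVec d i) := fun _ => rfl
  rw [Finset.prod_congr rfl fun i _ => this i]
  exact (Finset.prod_subset (Finset.subset_univ _)
    (fun x _ hx => by rw [Finsupp.notMem_support_iff.mp hx, pow_zero])).symm

lemma coeff_badExp_orbit (k : Type) [Field k] (d : ℕ) (hd : 2 ≤ d) :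
    MvPolynomial.coeff (badExp d) (orbitSum k d) = 0 := by
  rw [orbitSum, MvPolynomial.coeff_sum]
  apply Finset.sum_eq_zero
  intro σ _
  apply coeff_rename_eq_zero
  intro u hu
  rw [prod_X_eq, coeff_monomial]
  rw [if_neg]
  intro h
  rw [← h, badExp_eq_rExp d hd] at hu
  have key : ∀ m : Fin (d+1), ((σ.symm m : Fin (d+1)) : ℕ) = rExp d d m := by
    intro m
    have h2 : Finsupp.mapDomain (⇑σ) (eVec d) (σ (σ.symm m)) = eVec d (σ.symm m) :=
      Finsupp.mapDomain_apply σ.injective (eVec d) _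
    rw [Equiv.apply_symm_apply, hu] at h2
    exact h2.symm
  have k1 := key 1
  have k2 := key 2
  rw [rExp_apply] at k1 k2
  have v1 : ((1 : Fin (d+1)) : ℕ) = 1 := by
    have : ((1 : Fin (d+1)) : ℕ) = 1 % (d+1) := rfl
    rw [this, Nat.mod_eq_of_lt (by omega)]
  have v2 : ((2 : Fin (d+1)) : ℕ) = 2 := by
    have : ((2 : Fin (d+1)) : ℕ) = 2 % (d+1) := rfl
    rw [this, Nat.mod_eq_of_lt (by omega)]
  rw [v1, if_pos (by omega)] at k1
  rw [v2, if_pos (by omega)] at k2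
  have : σ.symm 1 = σ.symm 2 := Fin.ext (by omega)
  have h12 : (1 : Fin (d+1)) = 2 := σ.symm.injective this
  have := congrArg Fin.val h12
  rw [v1, v2] at this
  omega

lemma coeff_eVec_orbit (k : Type) [Field k] (d : ℕ) :
    MvPolynomial.coeff (eVec d) (orbitSum k d) = 1 := by
  rw [orbitSum, MvPolynomial.coeff_sum]
  simp_rw [prod_X_eq, rename_monomial, coeff_monomial]
  rw [Finset.sum_eq_single (1 : Equiv.Perm (Fin (d+1)))]
  · rw [if_pos]
    rw [Equiv.Perm.coe_one, Finsupp.mapDomain_id]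
  · intro σ _ hσ
    rw [if_neg]
    intro h
    apply hσ
    ext a
    have h2 : Finsupp.mapDomain (⇑σ) (eVec d) (σ a) = eVec d a :=
      Finsupp.mapDomain_apply σ.injective (eVec d) _
    rw [h] at h2
    exact h2
  · intro h
    exact absurd (Finset.mem_univ _) h

/-- In characteristic 2, the `S_n`-orbit sum of `x_1 x_2^2 ⋯ x_d^d` is not a
scalar multiple of `θ_1 θ_2 ⋯ θ_d`: the latter contains the monomial
`x_0 x_1 x_2 ∏_{i=2}^{d-1}(x_0⋯x_i)` with coefficient `3 ≡ 1 (mod 2)`, a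
monomial not appearing in the orbit sum. -/
theorem stmt_15 (k : Type) [Field k] [CharP k 2] (d : ℕ) (hd : 2 ≤ d) :
    MvPolynomial.coeff (badExp d)
        (∏ j ∈ Finset.Icc 1 d, MvPolynomial.esymm (Fin (d + 1)) k j) = 3 ∧
    (3 : k) = 1 ∧
    MvPolynomial.coeff (badExp d) (orbitSum k d) = 0 ∧
    ∀ a : k, orbitSum k d ≠
      MvPolynomial.C a * ∏ j ∈ Finset.Icc 1 d, MvPolynomial.esymm (Fin (d + 1)) k j := by
  have hP : MvPolynomial.coeff (badExp d)
      (∏ j ∈ Finset.Icc 1 d, MvPolynomial.esymm (Fin (d + 1)) k j) = 3 := by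
    rw [badExp_eq_rExp d hd]
    exact coeff_rExp_prod k d hd d hd le_rfl
  have h3 : (3:k) = 1 := by
    have h2 : ((2:ℕ):k) = 0 := CharP.cast_eq_zero k 2
    have he : (3:k) = (2:k) + 1 := by norm_num
    rw [he, show (2:k) = ((2:ℕ):k) by norm_cast, h2, zero_add]
  have hO : MvPolynomial.coeff (badExp d) (orbitSum k d) = 0 := coeff_badExp_orbit k d hd
  refine ⟨hP, h3, hO, ?_⟩
  intro a heq
  have hc := congrArg (MvPolynomial.coeff (badExp d)) heq
  rw [hO, MvPolynomial.coeff_C_mul, hP, h3, mul_one] at hc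
  rw [← hc, map_zero, zero_mul] at heq
  have h1 := coeff_eVec_orbit k d
  rw [heq] at h1
  simp at h1
end

section
/- Let V and W be k-vector spaces graded by partitions as above with dim V_λ = dim W_λ finite for all λ, let a finite group G act on V and W preserving the partition grading, with |G| invertible in k. Suppose Ξ : V → W is a k-linear (not necessarily equivariant) isomorphism that is shape-filtered and G-equivariant in the top shape, meaning for homogeneous f ∈ V_λ and σ ∈ G, σ·Ξ(f) − Ξ(σ·f) ∈ ⊕_{μ ◁ λ} W_μ (strict dominance). Then the averaged map Ξ*(f) := |G|^{-1} Σ_{σ∈G} σ·Ξ(σ^{-1}·f) is a G-equivariant k-linear isomorphism from V to W. -/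
/-- Partitions (of arbitrary natural numbers), modeled as antitone finitely
supported functions `ℕ →₀ ℕ`. -/
def PartitionF : Type := {f : ℕ →₀ ℕ // Antitone ⇑f}

instance : DecidableEq PartitionF :=
  inferInstanceAs (DecidableEq {f : ℕ →₀ ℕ // Antitone ⇑f})

/-- Dominance order: `mu ⊴ lam` iff they are partitions of the same number
and every partial sum of `mu` is at most the corresponding one of `lam`. -/
def pdominates (mu lam : PartitionF) : Prop :=
  (mu.1.sum fun _ m => m) = (lam.1.sum fun _ m => m) ∧
  ∀ j : ℕ, ∑ i ∈ Finset.range (j + 1), mu.1 i ≤ ∑ i ∈ Finset.range (j + 1), lam.1 i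

open Module

lemma pdominates_refl (mu : PartitionF) : pdominates mu mu := ⟨rfl, fun _ => le_rfl⟩

lemma pdominates_trans {a b c : PartitionF} (h1 : pdominates a b) (h2 : pdominates b c) :
    pdominates a c := ⟨h1.1.trans h2.1, fun j => (h1.2 j).trans (h2.2 j)⟩

lemma pdominates_antisymm {a b : PartitionF} (h1 : pdominates a b) (h2 : pdominates b a) :
    a = b := by
  have hs : ∀ j, ∑ i ∈ Finset.range (j + 1), a.1 i = ∑ i ∈ Finset.range (j + 1), b.1 i :=
    fun j => le_antisymm (h1.2 j) (h2.2 j)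
  have hpt : ∀ i, a.1 i = b.1 i := by
    intro i
    induction i with
    | zero =>
      have := hs 0
      simpa using this
    | succ n ih =>
      have h1' := hs (n + 1)
      have h2' := hs n
      have e1 : ∑ i ∈ Finset.range (n + 1 + 1), a.1 i
          = ∑ i ∈ Finset.range (n + 1), a.1 i + a.1 (n + 1) := Finset.sum_range_succ _ _
      have e2 : ∑ i ∈ Finset.range (n + 1 + 1), b.1 i
          = ∑ i ∈ Finset.range (n + 1), b.1 i + b.1 (n + 1) := Finset.sum_range_succ _ _
      omega
  exact Subtype.ext (Finsupp.ext hpt)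

lemma range_sum_le (f : ℕ →₀ ℕ) (m : ℕ) :
    ∑ i ∈ Finset.range m, f i ≤ f.sum fun _ n => n := by
  calc ∑ i ∈ Finset.range m, f i ≤ ∑ i ∈ Finset.range m ∪ f.support, f i :=
        Finset.sum_le_sum_of_subset Finset.subset_union_left
    _ = ∑ i ∈ f.support, f i := by
        refine (Finset.sum_subset Finset.subset_union_right ?_).symm
        intro x _ hx
        exact Finsupp.notMem_support_iff.mp hx
    _ = f.sum fun _ n => n := rfl

lemma partition_apply_le {mu : PartitionF} {d : ℕ} (h : (mu.1.sum fun _ m => m) = d) (i : ℕ) :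
    mu.1 i ≤ d := by
  have h1 : mu.1 i ≤ ∑ j ∈ Finset.range (i + 1), mu.1 j :=
    Finset.single_le_sum (fun j _ => Nat.zero_le _) (Finset.self_mem_range_succ i)
  exact h1.trans (by rw [← h]; exact range_sum_le _ _)

lemma partition_apply_eq_zero {mu : PartitionF} {d : ℕ} (h : (mu.1.sum fun _ m => m) = d)
    {i : ℕ} (hi : d ≤ i) : mu.1 i = 0 := by
  by_contra hne
  have h1 : ∀ j ∈ Finset.range (i + 1), 1 ≤ mu.1 j := by
    intro j hj
    have := mu.2 (Nat.le_of_lt_succ (Finset.mem_range.mp hj))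
    omega
  have h2 : i + 1 ≤ ∑ j ∈ Finset.range (i + 1), mu.1 j := by
    calc i + 1 = ∑ _j ∈ Finset.range (i + 1), 1 := by simp
      _ ≤ _ := Finset.sum_le_sum h1
  have h3 := range_sum_le mu.1 (i + 1)
  omega

lemma finite_same_sum (d : ℕ) : {mu : PartitionF | (mu.1.sum fun _ m => m) = d}.Finite := by
  classical
  set s : Set PartitionF := {mu : PartitionF | (mu.1.sum fun _ m => m) = d}
  have hinj : Set.InjOn (fun mu : PartitionF => fun i : Fin (d + 1) => mu.1 i.1) s := by
    intro a ha b hb hab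
    refine Subtype.ext (Finsupp.ext fun i => ?_)
    by_cases hi : i < d + 1
    · exact congrFun hab ⟨i, hi⟩
    · rw [partition_apply_eq_zero ha (by omega), partition_apply_eq_zero hb (by omega)]
  refine Set.Finite.of_finite_image ?_ hinj
  have hsub : ((fun mu : PartitionF => fun i : Fin (d + 1) => mu.1 i.1) '' s) ⊆
      Set.pi Set.univ fun _ : Fin (d + 1) => Set.Iic d := by
    rintro _ ⟨mu, hmu, rfl⟩ i _
    exact partition_apply_le hmu i.1
  exact (Set.Finite.pi fun _ => Set.finite_Iic d).subset hsub

open Module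

lemma finrank_finset_sup_eq_sum {k M ι : Type*} [Field k] [AddCommGroup M] [Module k M]
    [DecidableEq ι] {p : ι → Submodule k M} (hp : iSupIndep p)
    [∀ i, FiniteDimensional k (p i)] (s : Finset ι) :
    finrank k (s.sup p : Submodule k M) = ∑ i ∈ s, finrank k (p i) := by
  classical
  induction s using Finset.induction_on with
  | empty => simp [finrank_bot]
  | @insert a s ha ih =>
    rw [Finset.sup_insert, Finset.sum_insert ha, ← ih]
    have hdisj : Disjoint (p a) (s.sup p : Submodule k M) := by
      refine (hp a).mono_right ?_
      refine Finset.sup_le fun j hj => ?_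
      exact le_iSup_of_le j (le_iSup_of_le (fun h => ha (h ▸ hj)) le_rfl)
    have := Submodule.finrank_sup_add_finrank_inf_eq (p a) (s.sup p : Submodule k M)
    rw [hdisj.eq_bot, finrank_bot, add_zero] at this
    exact this

open Module


/-- Averaging trick: a shape-filtered linear isomorphism `Ξ` between
partition-graded `G`-representations (grading preserved by `G`, components of
matching finite dimension, `|G|` invertible in `k`) that is `G`-equivariant
in the top shape averages to a genuinely `G`-equivariant linear
isomorphism `Ξ* = |G|⁻¹ Σ_g g∘Ξ∘g⁻¹`. -/
theorem stmt_18 (k V W G : Type) [Field k] [Group G] [Fintype G]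
    [AddCommGroup V] [Module k V] [AddCommGroup W] [Module k W]
    (ρV : Representation k G V) (ρW : Representation k G W)
    (𝒱 : PartitionF → Submodule k V) (𝒲 : PartitionF → Submodule k W)
    (hV : DirectSum.IsInternal 𝒱) (hW : DirectSum.IsInternal 𝒲)
    (hVfd : ∀ lam, FiniteDimensional k (𝒱 lam))
    (hWfd : ∀ lam, FiniteDimensional k (𝒲 lam))
    (hdim : ∀ lam, Module.finrank k (𝒱 lam) = Module.finrank k (𝒲 lam))
    (hVst : ∀ (g : G) (lam : PartitionF), ∀ x ∈ 𝒱 lam, ρV g x ∈ 𝒱 lam)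
    (hWst : ∀ (g : G) (lam : PartitionF), ∀ x ∈ 𝒲 lam, ρW g x ∈ 𝒲 lam)
    (hcard : (Fintype.card G : k) ≠ 0)
    (Ξ : V ≃ₗ[k] W)
    (hfil : ∀ lam, ∀ x ∈ 𝒱 lam,
      Ξ x ∈ ⨆ mu ∈ {mu : PartitionF | pdominates mu lam}, 𝒲 mu)
    (htop : ∀ lam, ∀ x ∈ 𝒱 lam, ∀ g : G,
      ρW g (Ξ x) - Ξ (ρV g x) ∈
        ⨆ mu ∈ {mu : PartitionF | pdominates mu lam ∧ mu ≠ lam}, 𝒲 mu)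
    (Ξstar : V →ₗ[k] W)
    (hΞstar : ∀ v : V, Ξstar v =
      (Fintype.card G : k)⁻¹ • ∑ g : G, ρW g (Ξ (ρV g⁻¹ v))) :
    Function.Bijective Ξstar ∧
      ∀ (g : G) (v : V), Ξstar (ρV g v) = ρW g (Ξstar v) := by
  classical
  haveI := hVfd
  haveI := hWfd
  -- equivariance
  have hequiv : ∀ (g : G) (v : V), Ξstar (ρV g v) = ρW g (Ξstar v) := by
    intro g v
    rw [hΞstar, hΞstar, map_smul, map_sum]
    congr 1
    refine (Fintype.sum_bijective (fun σ : G => g * σ) (Group.mulLeft_bijective g)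
      (fun σ : G => ρW g ((ρW σ) (Ξ ((ρV σ⁻¹) v))))
      (fun h : G => ρW h (Ξ ((ρV h⁻¹) ((ρV g) v)))) (fun σ => ?_)).symm
    have h1 : (ρV (g * σ)⁻¹) ((ρV g) v) = (ρV σ⁻¹) v := by
      rw [← Module.End.mul_apply, ← map_mul]
      congr 1
      group
    simp only [h1, map_mul, Module.End.mul_apply]
  refine ⟨?_, hequiv⟩
  -- finiteness of dominance sets
  have hDfin : ∀ lam : PartitionF, {mu : PartitionF | pdominates mu lam}.Finite := fun lam =>
    (finite_same_sum (lam.1.sum fun _ m => m)).subset fun mu hmu => hmu.1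
  have hDsfin : ∀ lam : PartitionF,
      {mu : PartitionF | pdominates mu lam ∧ mu ≠ lam}.Finite :=
    fun lam => (hDfin lam).subset fun mu hmu => hmu.1
  have hDmono : ∀ {a b : PartitionF}, pdominates a b →
      {mu : PartitionF | pdominates mu a} ⊆ {mu : PartitionF | pdominates mu b} :=
    fun hab mu hmu => pdominates_trans hmu hab
  have hDsmono : ∀ {a b : PartitionF}, pdominates a b →
      {mu : PartitionF | pdominates mu a ∧ mu ≠ a} ⊆
        {mu : PartitionF | pdominates mu b ∧ mu ≠ b} := by
    rintro a b hab mu ⟨h1, h2⟩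
    refine ⟨pdominates_trans h1 hab, fun he => ?_⟩
    subst he
    exact h2 (pdominates_antisymm h1 hab)
  -- finrank equality for finite collections
  have hfr : ∀ (s : Set PartitionF), s.Finite →
      finrank k (⨆ mu ∈ s, 𝒱 mu : Submodule k V)
        = finrank k (⨆ mu ∈ s, 𝒲 mu : Submodule k W) := by
    intro s hs
    have hVs : (⨆ mu ∈ s, 𝒱 mu) = hs.toFinset.sup 𝒱 := by
      simp [Finset.sup_eq_iSup, Set.Finite.mem_toFinset]
    have hWs : (⨆ mu ∈ s, 𝒲 mu) = hs.toFinset.sup 𝒲 := by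
      simp [Finset.sup_eq_iSup, Set.Finite.mem_toFinset]
    rw [hVs, hWs, finrank_finset_sup_eq_sum hV.submodule_iSupIndep _,
      finrank_finset_sup_eq_sum hW.submodule_iSupIndep _]
    exact Finset.sum_congr rfl fun mu _ => hdim mu
  have hVfin : ∀ (s : Set PartitionF), s.Finite →
      FiniteDimensional k (⨆ mu ∈ s, 𝒱 mu : Submodule k V) := by
    intro s hs
    have hVs : (⨆ mu ∈ s, 𝒱 mu) = hs.toFinset.sup 𝒱 := by
      simp [Finset.sup_eq_iSup, Set.Finite.mem_toFinset]
    rw [hVs]; infer_instance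
  have hWfin : ∀ (s : Set PartitionF), s.Finite →
      FiniteDimensional k (⨆ mu ∈ s, 𝒲 mu : Submodule k W) := by
    intro s hs
    have hWs : (⨆ mu ∈ s, 𝒲 mu) = hs.toFinset.sup 𝒲 := by
      simp [Finset.sup_eq_iSup, Set.Finite.mem_toFinset]
    rw [hWs]; infer_instance
  -- the averaged map agrees with Ξ modulo strictly dominated shapes
  have hstrict : ∀ lam : PartitionF, ∀ x ∈ 𝒱 lam,
      Ξstar x - Ξ x ∈ ⨆ mu ∈ {mu : PartitionF | pdominates mu lam ∧ mu ≠ lam}, 𝒲 mu := by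
    intro lam x hx
    have hrw : Ξstar x - Ξ x
        = (Fintype.card G : k)⁻¹ • ∑ g : G, ((ρW g) (Ξ ((ρV g⁻¹) x)) - Ξ x) := by
      rw [Finset.sum_sub_distrib, smul_sub, hΞstar]
      congr 1
      rw [Finset.sum_const, Finset.card_univ, ← Nat.cast_smul_eq_nsmul k, smul_smul,
        inv_mul_cancel₀ hcard, one_smul]
    rw [hrw]
    refine Submodule.smul_mem _ _ (Submodule.sum_mem _ fun g _ => ?_)
    have h2 : (ρV g) ((ρV g⁻¹) x) = x := by
      rw [← Module.End.mul_apply, ← map_mul, mul_inv_cancel, map_one, Module.End.one_apply]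
    have h3 := htop lam ((ρV g⁻¹) x) (hVst g⁻¹ lam x hx) g
    rw [h2] at h3
    exact h3
  -- Ξstar is shape-filtered
  have hfilstar : ∀ lam : PartitionF, ∀ x ∈ 𝒱 lam,
      Ξstar x ∈ ⨆ mu ∈ {mu : PartitionF | pdominates mu lam}, 𝒲 mu := by
    intro lam x hx
    have h1 := hstrict lam x hx
    have h2 : (⨆ mu ∈ {mu : PartitionF | pdominates mu lam ∧ mu ≠ lam}, 𝒲 mu)
        ≤ ⨆ mu ∈ {mu : PartitionF | pdominates mu lam}, 𝒲 mu :=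
      biSup_mono fun mu hmu => hmu.1
    have h3 : Ξstar x = (Ξstar x - Ξ x) + Ξ x := by abel
    rw [h3]
    exact Submodule.add_mem _ (h2 h1) (hfil lam x hx)
  -- Ξ restricted to a finite downward-closed collection is onto
  have hXisurj : ∀ (s : Set PartitionF), s.Finite →
      (∀ mu ∈ s, {nu : PartitionF | pdominates nu mu} ⊆ s) →
      ∀ w ∈ (⨆ mu ∈ s, 𝒲 mu : Submodule k W),
        ∃ v ∈ (⨆ mu ∈ s, 𝒱 mu : Submodule k V), Ξ v = w := by
    intro s hs hdc w hw
    haveI := hVfin s hs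
    haveI := hWfin s hs
    have hmaps : ∀ x ∈ (⨆ mu ∈ s, 𝒱 mu : Submodule k V),
        (Ξ : V →ₗ[k] W) x ∈ (⨆ mu ∈ s, 𝒲 mu : Submodule k W) := by
      have hle : (⨆ mu ∈ s, 𝒱 mu : Submodule k V)
          ≤ Submodule.comap (Ξ : V →ₗ[k] W) (⨆ mu ∈ s, 𝒲 mu) := by
        refine iSup₂_le fun mu hmu y hy => Submodule.mem_comap.mpr ?_
        have hm : (⨆ nu ∈ {nu : PartitionF | pdominates nu mu}, 𝒲 nu)
            ≤ ⨆ nu ∈ s, 𝒲 nu := biSup_mono (hdc mu hmu)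
        exact hm (hfil mu y hy)
      exact fun x hx => Submodule.mem_comap.mp (hle hx)
    have hinj : Function.Injective ((Ξ : V →ₗ[k] W).restrict hmaps) := by
      intro x y hxy
      have h1 : Ξ x.1 = Ξ y.1 := congrArg Subtype.val hxy
      exact Subtype.ext (Ξ.injective h1)
    have hsurj : Function.Surjective ((Ξ : V →ₗ[k] W).restrict hmaps) :=
      (LinearMap.injective_iff_surjective_of_finrank_eq_finrank (hfr s hs)).mp hinj
    obtain ⟨x, hx⟩ := hsurj ⟨w, hw⟩
    exact ⟨x.1, x.2, congrArg Subtype.val hx⟩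
  -- key induction: every dominance-filtration piece is in the image of Ξstar
  have hkey : ∀ lam : PartitionF,
      (⨆ mu ∈ {mu : PartitionF | pdominates mu lam}, 𝒲 mu)
        ≤ Submodule.map Ξstar (⨆ mu ∈ {mu : PartitionF | pdominates mu lam}, 𝒱 mu) := by
    suffices H : ∀ n : ℕ, ∀ lam : PartitionF,
        {mu : PartitionF | pdominates mu lam ∧ mu ≠ lam}.ncard < n →
        (⨆ mu ∈ {mu : PartitionF | pdominates mu lam}, 𝒲 mu)
          ≤ Submodule.map Ξstar (⨆ mu ∈ {mu : PartitionF | pdominates mu lam}, 𝒱 mu) by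
      exact fun lam => H ({mu : PartitionF | pdominates mu lam ∧ mu ≠ lam}.ncard + 1) lam
        (Nat.lt_succ_self _)
    intro n
    induction n with
    | zero => exact fun lam h => absurd h (Nat.not_lt_zero _)
    | succ n IH =>
      intro lam hlt
      have hd : ∀ nu ∈ {mu : PartitionF | pdominates mu lam ∧ mu ≠ lam},
          (⨆ mu ∈ {mu : PartitionF | pdominates mu nu}, 𝒲 mu)
            ≤ Submodule.map Ξstar
                (⨆ mu ∈ {mu : PartitionF | pdominates mu lam}, 𝒱 mu) := by
        intro nu hnu
        have hsub : {mu : PartitionF | pdominates mu nu ∧ mu ≠ nu}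
            ⊂ {mu : PartitionF | pdominates mu lam ∧ mu ≠ lam} := by
          refine ⟨hDsmono hnu.1, fun hba => ?_⟩
          exact (hba hnu).2 rfl
        have hcardlt : {mu : PartitionF | pdominates mu nu ∧ mu ≠ nu}.ncard < n :=
          lt_of_lt_of_le (Set.ncard_lt_ncard hsub (hDsfin lam)) (Nat.lt_succ_iff.mp hlt)
        exact (IH nu hcardlt).trans (Submodule.map_mono (biSup_mono (hDmono hnu.1)))
      intro w hw
      obtain ⟨v, hv, hvw⟩ := hXisurj {mu : PartitionF | pdominates mu lam} (hDfin lam)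
        (fun mu hmu => hDmono hmu) w hw
      have hle : (⨆ mu ∈ {mu : PartitionF | pdominates mu lam}, 𝒱 mu)
          ≤ Submodule.comap ((Ξ : V →ₗ[k] W) - Ξstar)
              (⨆ mu ∈ {mu : PartitionF | pdominates mu lam ∧ mu ≠ lam}, 𝒲 mu) := by
        refine iSup₂_le fun mu hmu x hx => Submodule.mem_comap.mpr ?_
        have h1 := hstrict mu x hx
        have h2 : ((Ξ : V →ₗ[k] W) - Ξstar) x = -(Ξstar x - Ξ x) := by
          simp only [LinearMap.sub_apply, LinearEquiv.coe_coe]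
          abel
        rw [h2]
        have hm : (⨆ nu ∈ {nu : PartitionF | pdominates nu mu ∧ nu ≠ mu}, 𝒲 nu)
            ≤ ⨆ nu ∈ {nu : PartitionF | pdominates nu lam ∧ nu ≠ lam}, 𝒲 nu :=
          biSup_mono (hDsmono hmu)
        exact Submodule.neg_mem _ (hm h1)
      have hc := Submodule.mem_comap.mp (hle hv)
      rw [LinearMap.sub_apply] at hc
      have hcs : (⨆ mu ∈ {mu : PartitionF | pdominates mu lam ∧ mu ≠ lam}, 𝒲 mu)
          ≤ Submodule.map Ξstar (⨆ mu ∈ {mu : PartitionF | pdominates mu lam}, 𝒱 mu) := by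
        refine iSup₂_le fun nu hnu => ?_
        have h1 : 𝒲 nu ≤ ⨆ mu ∈ {mu : PartitionF | pdominates mu nu}, 𝒲 mu :=
          le_biSup 𝒲 (pdominates_refl nu)
        exact h1.trans (hd nu hnu)
      obtain ⟨u, hu, huw⟩ := hcs hc
      refine ⟨v + u, Submodule.add_mem _ hv hu, ?_⟩
      rw [map_add, huw]
      have : ((Ξ : V →ₗ[k] W)) v = w := hvw
      rw [← this]; abel
  -- surjectivity
  have hsurj : Function.Surjective Ξstar := by
    rw [← LinearMap.range_eq_top, eq_top_iff, ← hW.submodule_iSup_eq_top]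
    refine iSup_le fun lam => ?_
    have h1 : 𝒲 lam ≤ ⨆ mu ∈ {mu : PartitionF | pdominates mu lam}, 𝒲 mu :=
      le_biSup 𝒲 (pdominates_refl lam)
    exact h1.trans ((hkey lam).trans LinearMap.map_le_range)
  -- injectivity
  have hinj : Function.Injective Ξstar := by
    refine (injective_iff_map_eq_zero Ξstar).mpr fun v hv0 => ?_
    have hvtop : v ∈ ⨆ lam, 𝒱 lam := by rw [hV.submodule_iSup_eq_top]; trivial
    obtain ⟨S, hS⟩ := Submodule.mem_iSup_iff_exists_finset.mp hvtop
    set T : Set PartitionF :=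
      ⋃ nu ∈ (S : Set PartitionF),
        {mu : PartitionF | (mu.1.sum fun _ m => m) = (nu.1.sum fun _ m => m)} with hT
    have hTfin : T.Finite :=
      Set.Finite.biUnion S.finite_toSet fun nu _ => finite_same_sum _
    have hTmem : ∀ {mu : PartitionF}, mu ∈ T ↔
        ∃ nu ∈ S, (mu.1.sum fun _ m => m) = (nu.1.sum fun _ m => m) := by
      intro mu
      simp [hT]
    have hTdc : ∀ mu ∈ T, {nu : PartitionF | pdominates nu mu} ⊆ T := by
      intro mu hmu nu hnu
      obtain ⟨sig, hsig1, hsig2⟩ := hTmem.mp hmu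
      exact hTmem.mpr ⟨sig, hsig1, hnu.1.trans hsig2⟩
    have hST : ∀ mu : PartitionF, mu ∈ S → mu ∈ T := fun mu hmu =>
      hTmem.mpr ⟨mu, hmu, rfl⟩
    have hvT : v ∈ (⨆ mu ∈ T, 𝒱 mu : Submodule k V) := by
      have hm : (⨆ mu ∈ S, 𝒱 mu) ≤ ⨆ mu ∈ T, 𝒱 mu := biSup_mono hST
      exact hm hS
    haveI := hVfin T hTfin
    haveI := hWfin T hTfin
    have hmaps : ∀ x ∈ (⨆ mu ∈ T, 𝒱 mu : Submodule k V),
        Ξstar x ∈ (⨆ mu ∈ T, 𝒲 mu : Submodule k W) := by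
      have hle : (⨆ mu ∈ T, 𝒱 mu : Submodule k V)
          ≤ Submodule.comap Ξstar (⨆ mu ∈ T, 𝒲 mu) := by
        refine iSup₂_le fun mu hmu y hy => Submodule.mem_comap.mpr ?_
        have hm : (⨆ nu ∈ {nu : PartitionF | pdominates nu mu}, 𝒲 nu)
            ≤ ⨆ nu ∈ T, 𝒲 nu := biSup_mono (hTdc mu hmu)
        exact hm (hfilstar mu y hy)
      exact fun x hx => Submodule.mem_comap.mp (hle hx)
    have hWT : (⨆ mu ∈ T, 𝒲 mu : Submodule k W)
        ≤ Submodule.map Ξstar (⨆ mu ∈ T, 𝒱 mu) := by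
      refine iSup₂_le fun mu hmu => ?_
      have h1 : 𝒲 mu ≤ ⨆ nu ∈ {nu : PartitionF | pdominates nu mu}, 𝒲 nu :=
        le_biSup 𝒲 (pdominates_refl mu)
      have h2 : (⨆ nu ∈ {nu : PartitionF | pdominates nu mu}, 𝒱 nu)
          ≤ ⨆ nu ∈ T, 𝒱 nu := biSup_mono (hTdc mu hmu)
      exact h1.trans ((hkey mu).trans (Submodule.map_mono h2))
    have hesurj : Function.Surjective (Ξstar.restrict hmaps) := by
      rintro ⟨w, hw⟩
      obtain ⟨x, hx, hxw⟩ := hWT hw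
      exact ⟨⟨x, hx⟩, Subtype.ext hxw⟩
    have heinj : Function.Injective (Ξstar.restrict hmaps) :=
      (LinearMap.injective_iff_surjective_of_finrank_eq_finrank (hfr T hTfin)).mpr hesurj
    have hz : (Ξstar.restrict hmaps) ⟨v, hvT⟩ = 0 := Subtype.ext (by simpa using hv0)
    have hveq : (⟨v, hvT⟩ : (⨆ mu ∈ T, 𝒱 mu : Submodule k V)) = 0 :=
      heinj (hz.trans (map_zero _).symm)
    simpa using congrArg Subtype.val hveq
  exact ⟨hinj, hsurj⟩
end

section
/- Let Λ be a pure, balanced boolean complex of dimension n−1 with facets ε_1,…,ε_m, and for each face α let J_α ⊆ [n] be its label set. For a subset S ⊆ [n], two faces α, β of Λ with J_α = S and J_β = [n]∖S that lie in a common facet determine, via the sets of facets containing both, a partition property: for a fixed α with J_α = S, the collections of facets sitting over α and over each face β with J_β = [n]∖S and α ⪯ some common facet, partition the set of facets containing α. Consequently, the facet incidence vector of α (the 0-1 vector recording which facets contain α) equals the coordinate vector, with respect to the basis of facet generators, of (∏_{j ∈ [n]∖S} ω_j)·z_α in the Stanley–Reisner ring of Λ, where ω_j is the sum of vertex generators with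 label j. -/
/-- Let `Λ` be a pure, balanced boolean complex of dimension `n-1` with face
poset `F` (faces labeled by their label sets `J : F → Finset (Fin n)`),
facets `ε 1, …, ε m`, and Stanley–Reisner generators `z : F → R` satisfying
the structural facts of the Stanley–Reisner ring of `Λ` (the colorful
products `∏_{j∈T} ω_j` expand as the sum of the `z_b` with `J b = T`;
products of generators of faces with no common facet vanish; products of
generators of complementary-label faces under a common facet expand as the
sum of the generators of the common facets; the facet generators are linearly
independent, spanning the degree-(1,…,1) component).  Then for a face `α`
with label set `S = J α`: (a) the collections of facets sitting over both `α`
and each face `β` with `J β = [n]∖S` sharing a facet with `α` partition the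
set of facets containing `α`; and (b) the 0-1 facet incidence vector of `α`
is the coordinate vector of `(∏_{j∈[n]∖S} ω_j)·z_α` with respect to the
basis of facet generators. -/
theorem stmt_19 (k : Type) [Field k] (R : Type) [CommRing R] [Algebra k R]
    (n m : ℕ) (F : Type) [Fintype F] [PartialOrder F] [DecidableEq F]
    [DecidableRel ((· ≤ ·) : F → F → Prop)]
    (J : F → Finset (Fin n)) (ε : Fin m → F) (z : F → R)
    (hmono : ∀ a b : F, a ≤ b → J a ⊆ J b)
    (hstrict : ∀ a b : F, a < b → J a ⊂ J b)
    (hJne : ∀ a : F, (J a).Nonempty)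
    (hfacetlabel : ∀ i, J (ε i) = Finset.univ)
    (hfull : ∀ a : F, J a = Finset.univ → ∃ i, ε i = a)
    (hεinj : Function.Injective ε)
    (hbelow : ∀ a : F, ∃ i, a ≤ ε i)
    (hunique : ∀ (i : Fin m) (S : Finset (Fin n)), S.Nonempty →
      ∃! a : F, a ≤ ε i ∧ J a = S)
    (hω : ∀ T : Finset (Fin n), T.Nonempty →
      (∏ j ∈ T, ∑ v ∈ Finset.filter (fun v : F => J v = {j}) Finset.univ, z v) =
        ∑ b ∈ Finset.filter (fun b : F => J b = T) Finset.univ, z b)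
    (hzero : ∀ a b : F, (¬∃ i, a ≤ ε i ∧ b ≤ ε i) → z a * z b = 0)
    (hprod : ∀ a b : F, (∃ i, a ≤ ε i ∧ b ≤ ε i) → J b = (J a)ᶜ →
      z a * z b =
        ∑ i ∈ Finset.filter (fun i : Fin m => a ≤ ε i ∧ b ≤ ε i) Finset.univ, z (ε i))
    (hli : LinearIndependent k (fun i : Fin m => z (ε i)))
    (α : F) :
    (((J α)ᶜ : Finset (Fin n)).Nonempty →
      (∀ b₁ b₂ : F, J b₁ = (J α)ᶜ → J b₂ = (J α)ᶜ → b₁ ≠ b₂ →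
        Disjoint
          (Finset.filter (fun i : Fin m => α ≤ ε i ∧ b₁ ≤ ε i) Finset.univ)
          (Finset.filter (fun i : Fin m => α ≤ ε i ∧ b₂ ≤ ε i) Finset.univ)) ∧
      Finset.filter (fun i : Fin m => α ≤ ε i) Finset.univ =
        Finset.biUnion (Finset.filter (fun b : F => J b = (J α)ᶜ) Finset.univ)
          (fun b => Finset.filter (fun i : Fin m => α ≤ ε i ∧ b ≤ ε i) Finset.univ)) ∧
    (∏ j ∈ (J α)ᶜ, ∑ v ∈ Finset.filter (fun v : F => J v = {j}) Finset.univ, z v) * z α =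
      ∑ i : Fin m, (if α ≤ ε i then (1 : R) else 0) * z (ε i) := by

  classical
  have hdisj : ((J α)ᶜ : Finset (Fin n)).Nonempty →
      ∀ b₁ b₂ : F, J b₁ = (J α)ᶜ → J b₂ = (J α)ᶜ → b₁ ≠ b₂ →
        Disjoint
          (Finset.filter (fun i : Fin m => α ≤ ε i ∧ b₁ ≤ ε i) Finset.univ)
          (Finset.filter (fun i : Fin m => α ≤ ε i ∧ b₂ ≤ ε i) Finset.univ) := by
    intro hne b₁ b₂ h1 h2 hne12
    rw [Finset.disjoint_left]
    intro i hi1 hi2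
    simp only [Finset.mem_filter, Finset.mem_univ, true_and] at hi1 hi2
    obtain ⟨a, _, hu⟩ := hunique i ((J α)ᶜ) hne
    exact hne12 ((hu b₁ ⟨hi1.2, h1⟩).trans (hu b₂ ⟨hi2.2, h2⟩).symm)
  have hcover : ((J α)ᶜ : Finset (Fin n)).Nonempty →
      Finset.filter (fun i : Fin m => α ≤ ε i) Finset.univ =
        Finset.biUnion (Finset.filter (fun b : F => J b = (J α)ᶜ) Finset.univ)
          (fun b => Finset.filter (fun i : Fin m => α ≤ ε i ∧ b ≤ ε i) Finset.univ) := by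
    intro hne
    ext i
    simp only [Finset.mem_filter, Finset.mem_biUnion, Finset.mem_univ, true_and]
    constructor
    · intro hi
      obtain ⟨b, ⟨hb, hJb⟩, _⟩ := hunique i ((J α)ᶜ) hne
      exact ⟨b, hJb, hi, hb⟩
    · rintro ⟨b, _, hi, _⟩; exact hi
  refine ⟨fun hne => ⟨hdisj hne, hcover hne⟩, ?_⟩
  have hrhs : ∑ i : Fin m, (if α ≤ ε i then (1 : R) else 0) * z (ε i) =
      ∑ i ∈ Finset.filter (fun i : Fin m => α ≤ ε i) Finset.univ, z (ε i) := by
    rw [Finset.sum_filter]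
    congr 1; ext i
    by_cases h : α ≤ ε i <;> simp [h]
  rw [hrhs]
  by_cases hne : ((J α)ᶜ : Finset (Fin n)).Nonempty
  · rw [hω _ hne, Finset.sum_mul]
    have hterm : ∀ b ∈ Finset.filter (fun b : F => J b = (J α)ᶜ) Finset.univ,
        z b * z α =
          ∑ i ∈ Finset.filter (fun i : Fin m => α ≤ ε i ∧ b ≤ ε i) Finset.univ,
            z (ε i) := by
      intro b hb
      simp only [Finset.mem_filter, Finset.mem_univ, true_and] at hb
      rw [mul_comm]
      by_cases hc : ∃ i, α ≤ ε i ∧ b ≤ ε i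
      · exact hprod α b hc hb
      · rw [hzero α b hc]
        rw [Finset.filter_false_of_mem, Finset.sum_empty]
        intro i _ hi
        exact hc ⟨i, hi⟩
    rw [Finset.sum_congr rfl hterm, ← Finset.sum_biUnion, ← hcover hne]
    intro b₁ h1 b₂ h2 h12
    simp only [Finset.mem_coe, Finset.mem_filter, Finset.mem_univ, true_and] at h1 h2
    exact hdisj hne b₁ b₂ h1 h2 h12
  · have huniv : J α = Finset.univ := by
      rwa [Finset.not_nonempty_iff_eq_empty, Finset.compl_eq_empty_iff] at hne
    rw [Finset.not_nonempty_iff_eq_empty, Finset.compl_eq_empty_iff] at hne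
    rw [huniv, Finset.compl_univ, Finset.prod_empty, one_mul]
    obtain ⟨i₀, hi₀⟩ := hfull α huniv
    have hfilter : Finset.filter (fun i : Fin m => α ≤ ε i) Finset.univ = {i₀} := by
      ext i
      simp only [Finset.mem_filter, Finset.mem_univ, true_and, Finset.mem_singleton]
      constructor
      · intro hi
        by_contra hne'
        have hlt : ε i₀ < ε i := lt_of_le_of_ne (hi₀ ▸ hi) (fun h => hne' (hεinj h).symm)
        have := hstrict _ _ hlt
        rw [hfacetlabel, hfacetlabel] at this
        exact (lt_irrefl _ this)
      · rintro rfl; exact hi₀.ge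
    rw [hfilter, Finset.sum_singleton, hi₀]
end
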